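/- arXiv:1210.0342 — 9 statements merged into one kernel-verified Lean document; each statement's English description precedes it below -/
import Mathlib

section
/- Let (A, m, k) be a commutative local ring, M a finitely generated A-module, N a finitely generated A-module, and φ : N → Hom_A(M, A) an A-linear map. Assume the induced k-linear map N/mN → Hom_k(M/mM, k) (sending the class of n to the functional on M/mM induced by composing φ(n) with the quotient A → k) is injective. Then N is a finite free A-module of rank n = dim_k N/mN, φ is injective with image a direct summand of Hom_A(M, A), and there is a direct sum decomposition M = M₁ ⊕ M₂ with M₁ free of rank n such that the image of φ equals the submodule of functionals in Hom_A(M, A) vanishing on M₂ (canonically identified with Hom_A(M₁, A)). -/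
/-!
Lift a basis `b` of `k ⊗ N` to `x : Fin n → N`; by Nakayama the `x i` generate `N`. Residual
injectivity of `φ` says that the residual pairing between `k ⊗ N` and `k ⊗ M` is nondegenerate on
the left, so, the spaces being finite dimensional, every functional on `k ⊗ N` is induced by
`k ⊗ M`. Lifting the dual basis of `b` gives `m : Fin n → M` whose pairing matrix
`G i j = φ (x i) (m j)` is the identity modulo `𝔪`, hence invertible. Everything follows from the
invertibility of `G`: the `x i` form a basis of `N`, `φ` followed by evaluation at the `m j` is an
isomorphism `N ≃ Aⁿ`, `M₁ = span m` is a free complement of `M₂ = ⋂ ker φ (x i)`, and the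
functionals vanishing on `M₂` are those factoring through `(φ (x i))ᵢ : M → Aⁿ`, i.e. the image
of `φ`.
-/

open Function LinearMap Module TensorProduct

theorem LinearMap.isCompl_range_ker_of_bijective_comp {R M P Q : Type*} [Ring R]
    [AddCommGroup M] [Module R M] [AddCommGroup P] [Module R P] [AddCommGroup Q] [Module R Q]
    {f : M →ₗ[R] Q} {g : P →ₗ[R] M} (h : Bijective (f ∘ₗ g)) : IsCompl (range g) (ker f) := by
  let e := LinearEquiv.ofBijective _ h
  refine ⟨Submodule.disjoint_def.mpr ?_, codisjoint_iff.mpr (eq_top_iff.mpr fun y _ => ?_)⟩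
  · rintro _ ⟨c, rfl⟩ hc
    obtain rfl : c = 0 := h.injective (by simpa using hc)
    exact map_zero g
  · have hy : f (g (e.symm (f y))) = f y := e.apply_symm_apply (f y)
    rw [← add_sub_cancel (g (e.symm (f y))) y]
    exact Submodule.add_mem_sup (mem_range_self _ _) (by simp [hy])

namespace Matrix

variable {R ι : Type*} [CommRing R] [Fintype ι] [DecidableEq ι] {G : Matrix ι ι R}

theorem mulVec_bijective_of_isUnit (hG : IsUnit G) : Bijective G.mulVec :=
  ⟨mulVec_injective_of_isUnit hG, mulVec_surjective_iff_isUnit.mpr hG⟩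

theorem vecMul_bijective_of_isUnit (hG : IsUnit G) : Bijective G.vecMul :=
  ⟨vecMul_injective_of_isUnit hG, vecMul_surjective_iff_isUnit.mpr hG⟩

theorem isUnit_of_isUnit_map {S : Type*} [CommRing S] {f : R →+* S} [IsLocalHom f]
    (h : IsUnit (G.map f)) : IsUnit G := by
  rw [isUnit_iff_isUnit_det] at h ⊢
  rwa [← isUnit_map_iff f, RingHom.map_det]

end Matrix

section PairingMatrix

variable {R M N ι : Type*} [CommRing R] [AddCommGroup M] [Module R M] [AddCommGroup N]
  [Module R N] [Fintype ι]

def pairingMatrix (φ : N →ₗ[R] Dual R M) (x : ι → N) (m : ι → M) : Matrix ι ι R :=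
  .of fun i j => φ (x i) (m j)

def evalFamily (m : ι → M) : Dual R M →ₗ[R] ι → R := pi fun j => applyₗ (m j)

theorem evalFamily_comp_comp_linearCombination (φ : N →ₗ[R] Dual R M) (x : ι → N) (m : ι → M) :
    evalFamily m ∘ₗ φ ∘ₗ Fintype.linearCombination R x = (pairingMatrix φ x m).vecMulLinear := by
  ext a j
  simp [evalFamily, pairingMatrix, Fintype.linearCombination_apply, Matrix.vecMul, dotProduct]

theorem pi_comp_linearCombination (φ : N →ₗ[R] Dual R M) (x : ι → N) (m : ι → M) :
    (pi fun i => φ (x i)) ∘ₗ Fintype.linearCombination R m = (pairingMatrix φ x m).mulVecLin := by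
  ext c i
  simp [pairingMatrix, Fintype.linearCombination_apply, Matrix.mulVec, dotProduct, mul_comm]

variable [DecidableEq ι] {φ : N →ₗ[R] Dual R M} {x : ι → N} {m : ι → M}

theorem linearIndependent_left_of_isUnit_pairingMatrix (hG : IsUnit (pairingMatrix φ x m)) :
    LinearIndependent R x := by
  rw [linearIndependent_iff_injective_fintypeLinearCombination]
  refine Injective.of_comp (f := evalFamily m ∘ₗ φ) ?_
  rw [← coe_comp, LinearMap.comp_assoc, evalFamily_comp_comp_linearCombination]
  exact Matrix.vecMul_injective_of_isUnit hG

theorem linearIndependent_right_of_isUnit_pairingMatrix (hG : IsUnit (pairingMatrix φ x m)) :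
    LinearIndependent R m := by
  rw [linearIndependent_iff_injective_fintypeLinearCombination]
  refine Injective.of_comp (f := pi fun i => φ (x i)) ?_
  rw [← coe_comp, pi_comp_linearCombination]
  exact Matrix.mulVec_injective_of_isUnit hG

theorem bijective_evalFamily_comp_of_isUnit_pairingMatrix
    (hx : Submodule.span R (Set.range x) = ⊤) (hG : IsUnit (pairingMatrix φ x m)) :
    Bijective (evalFamily m ∘ₗ φ) := by
  have hc : Bijective (evalFamily m ∘ₗ φ ∘ₗ Fintype.linearCombination R x) := by
    rw [evalFamily_comp_comp_linearCombination]
    exact Matrix.vecMul_bijective_of_isUnit hG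
  have hα : Bijective (Fintype.linearCombination R x) :=
    ⟨Injective.of_comp (f := evalFamily m ∘ₗ φ) hc.injective,
      (span_range_eq_top_iff_surjective_fintypeLinearCombination R x).mp hx⟩
  rw [← LinearMap.comp_assoc, coe_comp] at hc
  exact (Bijective.of_comp_iff _ hα).mp hc

theorem range_eq_dualAnnihilator_ker_of_isUnit_pairingMatrix
    (hx : Submodule.span R (Set.range x) = ⊤) (hG : IsUnit (pairingMatrix φ x m)) :
    range φ = (ker (pi fun i => φ (x i))).dualAnnihilator := by
  have hψ : Surjective (pi fun i => φ (x i)) := by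
    refine .of_comp (g := Fintype.linearCombination R m) ?_
    rw [← coe_comp, pi_comp_linearCombination]
    exact (Matrix.mulVec_bijective_of_isUnit hG).surjective
  -- Both ranges are spanned by the functionals `φ (x i)`.
  rw [← range_dualMap_eq_dualAnnihilator_ker_of_surjective _ hψ, range_eq_map, ← hx,
    range_eq_map, ← (Pi.basisFun R ι).dualBasis.span_eq, Submodule.map_span, Submodule.map_span,
    ← Set.range_comp, ← Set.range_comp]
  congr 2
  ext i z
  simp

end PairingMatrix

section BaseChange

variable {R M N : Type*} [CommSemiring R] [AddCommMonoid M] [Module R M] [AddCommMonoid N]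
  [Module R N] (S : Type*) [CommSemiring S] [Algebra R S]

def pairingBaseChange (φ : N →ₗ[R] Dual R M) : S ⊗[R] N →ₗ[S] Dual S (S ⊗[R] M) :=
  liftBaseChange S (Dual.baseChange S ∘ₗ φ)

@[simp]
theorem pairingBaseChange_tmul_tmul (φ : N →ₗ[R] Dual R M) (s t : S) (y : N) (z : M) :
    pairingBaseChange S φ (s ⊗ₜ y) (t ⊗ₜ z) = s * t * algebraMap R S (φ y z) := by
  simp [pairingBaseChange, Algebra.smul_def]
  ring

end BaseChange

section LocalRing

open IsLocalRing

variable {A M N : Type*} [CommRing A] [IsLocalRing A] [AddCommGroup M] [Module A M]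
  [AddCommGroup N] [Module A N] {φ : N →ₗ[A] Dual A M}

theorem injective_pairingBaseChange_residueField
    (hφ : ∀ y : N, (∀ z : M, φ y z ∈ maximalIdeal A) → y ∈ maximalIdeal A • (⊤ : Submodule A N)) :
    Injective (pairingBaseChange (ResidueField A) φ) := by
  rw [injective_iff_map_eq_zero]
  intro t ht
  obtain ⟨y, rfl⟩ := TensorProduct.mk_surjective A N (ResidueField A) residue_surjective t
  have hy : ∀ z, φ y z ∈ maximalIdeal A := fun z =>
    (residue_eq_zero_iff _).mp (by simpa using LinearMap.congr_fun ht (1 ⊗ₜ z))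
  exact (LinearMap.ker_tensorProductMk N (I := maximalIdeal A)).ge (hφ y hy)

theorem exists_pairingMatrix_map_residue_eq_one [Module.Finite A M] {ι : Type*} [Fintype ι]
    [DecidableEq ι]
    (hφ : ∀ y : N, (∀ z : M, φ y z ∈ maximalIdeal A) → y ∈ maximalIdeal A • (⊤ : Submodule A N))
    (b : Basis ι (ResidueField A) (ResidueField A ⊗[A] N)) (x : ι → N)
    (hx : ∀ i, 1 ⊗ₜ x i = b i) :
    ∃ m : ι → M, (pairingMatrix φ x m).map (residue A) = 1 := by
  have hflip := flip_surjective_iff₂.mpr (injective_pairingBaseChange_residueField hφ)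
  choose v hv using fun j => hflip (b.coord j)
  choose m hm using fun j =>
    TensorProduct.mk_surjective A M (ResidueField A) residue_surjective (v j)
  refine ⟨m, Matrix.ext fun i j => ?_⟩
  have hres : residue A (φ (x i) (m j)) = pairingBaseChange (ResidueField A) φ (b i) (v j) := by
    rw [← hx, ← hm]
    simp
  rw [Matrix.map_apply, pairingMatrix, Matrix.of_apply, hres, ← flip_apply, hv, Basis.coord_apply,
    Basis.repr_self, Matrix.one_apply, Finsupp.single_apply]

end LocalRing

open IsLocalRing in
/-- **Splitting off a free dual summand.** Let `(A, 𝔪, k)` be a commutative local ring,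
`M`, `N` finitely generated `A`-modules, and `φ : N → Hom_A(M, A)` an `A`-linear map such
that the induced map `N/𝔪N → Hom_k(M/𝔪M, k)` is injective (equivalently: any `x : N` with
`φ x m ∈ 𝔪` for all `m : M` lies in `𝔪N`). Then `N` is free of rank
`n = dim_k N/𝔪N` (with `N/𝔪N` realized as `k ⊗[A] N`), `φ` is injective with image a direct
summand of the dual of `M`, and `M = M₁ ⊕ M₂` with `M₁` free of rank `n` and the image of
`φ` equal to the functionals vanishing on `M₂`. -/
theorem free_direct_summand_of_dual_of_residually_injective
    {A : Type*} [CommRing A] [IsLocalRing A]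
    {M N : Type*} [AddCommGroup M] [Module A M] [AddCommGroup N] [Module A N]
    [Module.Finite A M] [Module.Finite A N]
    (φ : N →ₗ[A] Module.Dual A M)
    (hinj : ∀ x : N, (∀ m : M, φ x m ∈ IsLocalRing.maximalIdeal A) →
      x ∈ (IsLocalRing.maximalIdeal A) • (⊤ : Submodule A N)) :
    ∃ n : ℕ,
      n = Module.finrank (IsLocalRing.ResidueField A)
        ((IsLocalRing.ResidueField A) ⊗[A] N) ∧
      (∃ _ : Module.Basis (Fin n) A N, True) ∧
      Function.Injective φ ∧
      (∃ K : Submodule A (Module.Dual A M), IsCompl (LinearMap.range φ) K) ∧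
      ∃ M₁ M₂ : Submodule A M, IsCompl M₁ M₂ ∧
        (∃ _ : Module.Basis (Fin n) A M₁, True) ∧
        ∀ f : Module.Dual A M, f ∈ LinearMap.range φ ↔ ∀ x ∈ M₂, f x = 0 := by
  let b := Module.finBasis (ResidueField A) (ResidueField A ⊗[A] N)
  choose x hx using fun i => TensorProduct.mk_surjective A N _ residue_surjective (b i)
  have hspan := span_eq_top_of_tmul_eq_basis x b hx
  obtain ⟨m, hm⟩ := exists_pairingMatrix_map_residue_eq_one hinj b x hx
  have hG := Matrix.isUnit_of_isUnit_map (f := residue A) (hm ▸ isUnit_one)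
  have hev := bijective_evalFamily_comp_of_isUnit_pairingMatrix hspan hG
  refine ⟨_, rfl, ⟨Basis.mk (linearIndependent_left_of_isUnit_pairingMatrix hG) hspan.ge, trivial⟩,
    Injective.of_comp (f := evalFamily m) hev.injective,
    ⟨_, isCompl_range_ker_of_bijective_comp hev⟩,
    Submodule.span A (Set.range m), ker (pi fun i => φ (x i)), ?_,
    ⟨Basis.span (linearIndependent_right_of_isUnit_pairingMatrix hG), trivial⟩, fun f => ?_⟩
  · rw [← Fintype.range_linearCombination]
    apply isCompl_range_ker_of_bijective_comp
    rw [pi_comp_linearCombination]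
    exact Matrix.mulVec_bijective_of_isUnit hG
  · rw [range_eq_dualAnnihilator_ker_of_isUnit_pairingMatrix hspan hG,
      Submodule.mem_dualAnnihilator]
end

section
/- Let p be a prime and R a commutative ring in which p·1 = 0. Let D₁, …, D_n be pairwise commuting derivations of R such that the p-fold composite D_i^p = 0 for each i, and suppose there are elements u₁, …, u_n ∈ R with D_i(u_j) = δ_ij for all i, j. Let S = {r ∈ R : D_i(r) = 0 for all i} be the subring of constants. Then u_i^p ∈ S for every i, and R is a free S-module with basis the monomials u₁^{a₁}⋯u_n^{a_n} for 0 ≤ a_i ≤ p−1; equivalently, the S-algebra homomorphism S[z₁, …, z_n]/(z₁^p − u₁^p, …, z_n^p − u_n^p) → R sending z_i to u_i is an isomorphism, so R is free of rank p^n over S. -/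
/-!
For a single derivation `D` with `D u = 1`, the integers `1, …, p - 1` are invertible, so every
`D`-constant `c` has the constant-coefficient antiderivative `c u^{j+1}/(j+1)` of `c u^j`. Hence
an element killed by `D^k` (`k ≤ p`) is, by induction on `k`, a polynomial of degree `< k` in `u`
with `D`-constant coefficients; and a vanishing such polynomial of degree `< p` has zero
coefficients, since applying `D` lowers its degree. For `n` derivations, expand first in `u₀`
with respect to `D₀`, then expand the coefficients with respect to the remaining derivations,
which preserve the `D₀`-constants because they commute with `D₀` and kill `u₀`.
-/

open Finset

theorem exists_intCast_mul_natCast_eq_one {R : Type*} [CommRing R] {p k : ℕ}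
    (hchar : (p : R) = 0) (hk : k.Coprime p) : ∃ a : ℤ, (a : R) * k = 1 := by
  refine ⟨k.gcdA p, ?_⟩
  have h := congrArg (Int.cast : ℤ → R) (Nat.gcd_eq_gcd_ab k p)
  push_cast [hk.gcd_eq_one, hchar] at h
  linear_combination -h

namespace Derivation

variable {R : Type*} [CommRing R] (D : Derivation ℤ R R) {u : R}

theorem map_mul_pow_succ_of_map_eq_zero (hu : D u = 1) {c : R} (hc : D c = 0) (j : ℕ) :
    D (c * u ^ (j + 1)) = c * (j + 1) * u ^ j := by
  simp only [D.leibniz, D.leibniz_pow, hc, hu, add_tsub_cancel_right, smul_eq_mul, mul_one,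
    nsmul_eq_mul, Nat.cast_add, Nat.cast_one, mul_zero, add_zero]
  ring

theorem eq_zero_of_sum_mul_pow_eq_zero {p : ℕ} (hp : p.Prime) (hchar : (p : R) = 0)
    (hu : D u = 1) :
    ∀ {m : ℕ}, m ≤ p → ∀ c : Fin m → R, (∀ j, D (c j) = 0) →
      ∑ j, c j * u ^ (j : ℕ) = 0 → c = 0
  | 0, _, c, _, _ => Subsingleton.elim _ _
  | m + 1, hm, c, hc, h => by
    rw [Fin.sum_univ_succ] at h
    have hD : ∑ j : Fin m, c j.succ * ((j : ℕ) + 1 : ℕ) * u ^ (j : ℕ) = 0 := by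
      simpa [map_sum, map_mul_pow_succ_of_map_eq_zero D hu (hc _), hc 0] using congrArg D h
    have htail := eq_zero_of_sum_mul_pow_eq_zero hp hchar hu (by omega) _
      (fun j => by simp [D.leibniz, hc]) hD
    have hsucc : ∀ j : Fin m, c j.succ = 0 := fun j => by
      obtain ⟨a, ha⟩ := exists_intCast_mul_natCast_eq_one hchar
        (Nat.coprime_of_lt_prime (Nat.succ_ne_zero j) (by omega) hp).symm
      have hj : c j.succ * ((j : ℕ) + 1 : ℕ) = 0 := congrFun htail j
      linear_combination (a : R) * hj - c j.succ * ha
    funext j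
    refine Fin.cases ?_ hsucc j
    simpa [hsucc] using h

theorem exists_sum_mul_pow_eq_of_iterate_eq_zero {p : ℕ} (hp : p.Prime) (hchar : (p : R) = 0)
    (hu : D u = 1) :
    ∀ {k : ℕ}, k ≤ p → ∀ r : R, D^[k] r = 0 →
      ∃ c : Fin k → R, (∀ j, D (c j) = 0) ∧ r = ∑ j, c j * u ^ (j : ℕ)
  | 0, _, r, hr => ⟨0, fun j => j.elim0, by simpa using hr⟩
  | k + 1, hk, r, hr => by
    obtain ⟨b, hb, hDr⟩ :=
      exists_sum_mul_pow_eq_of_iterate_eq_zero hp hchar hu (by omega) (D r) hr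
    choose a ha using fun j : Fin k => exists_intCast_mul_natCast_eq_one hchar
      (Nat.coprime_of_lt_prime (Nat.succ_ne_zero j) (by omega) hp).symm
    push_cast at ha
    have hab : ∀ j, D (a j * b j) = 0 := fun j => by simp [D.leibniz, hb]
    -- `s` is an antiderivative of `D r`, so `r - s` is a constant
    set s := ∑ j : Fin k, a j * b j * u ^ ((j : ℕ) + 1)
    have hs : D (r - s) = 0 := by
      rw [map_sub, hDr, map_sum, ← sum_sub_distrib]
      refine sum_eq_zero fun j _ => ?_
      rw [map_mul_pow_succ_of_map_eq_zero D hu (hab j)]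
      linear_combination (-(b j * u ^ (j : ℕ))) * ha j
    refine ⟨Fin.cons (r - s) fun j => a j * b j, fun j => Fin.cases hs (fun j => hab j) j, ?_⟩
    simp [Fin.sum_univ_succ, s]

theorem map_sum_mul_prod_pow {ι : Type*} [Fintype ι] [DecidableEq ι] {p : ℕ} {v : ι → R}
    (hv : ∀ i, D (v i) = 0) (c : (ι → Fin p) → R) :
    D (∑ a, c a * ∏ i, v i ^ (a i : ℕ)) = ∑ a, D (c a) * ∏ i, v i ^ (a i : ℕ) := by
  refine (map_sum D _ _).trans (sum_congr rfl fun a _ => ?_)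
  have hprod : D (∏ i, v i ^ (a i : ℕ)) = 0 :=
    prod_induction _ (fun x => D x = 0) (fun x y hx hy => by simp [D.leibniz, hx, hy])
      D.map_one_eq_zero fun i _ => by simp [D.leibniz_pow, hv]
  simp [D.leibniz, hprod, mul_comm]

end Derivation

section Monomials

variable {R : Type*} [CommRing R] {p : ℕ}

theorem sum_mul_prod_pow_fin_succ {n : ℕ} (u : Fin (n + 1) → R)
    (c : (Fin (n + 1) → Fin p) → R) :
    ∑ a, c a * ∏ i, u i ^ (a i : ℕ) =
      ∑ k : Fin p, (∑ a : Fin n → Fin p, c (Fin.cons k a) * ∏ i, u i.succ ^ (a i : ℕ)) *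
        u 0 ^ (k : ℕ) := by
  rw [← (Fin.consEquiv fun _ => Fin p).sum_comp, Fintype.sum_prod_type]
  refine sum_congr rfl fun k _ => ?_
  rw [sum_mul]
  refine sum_congr rfl fun a _ => ?_
  simp only [Fin.consEquiv, Equiv.coe_fn_mk, Fin.prod_univ_succ, Fin.cons_zero, Fin.cons_succ]
  ring

theorem eq_zero_of_sum_mul_prod_pow_eq_zero (hp : p.Prime) (hchar : (p : R) = 0) {n : ℕ}
    (D : Fin n → Derivation ℤ R R) (u : Fin n → R)
    (hu : ∀ i j, D i (u j) = if i = j then 1 else 0) (c : (Fin n → Fin p) → R)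
    (hc : ∀ a j, D j (c a) = 0) (h : ∑ a, c a * ∏ i, u i ^ (a i : ℕ) = 0) : c = 0 := by
  induction n with
  | zero =>
    funext a
    simpa [Subsingleton.elim a default] using h
  | succ n ih =>
    have hu0 (i : Fin n) : D 0 (u i.succ) = 0 := by
      simpa [(Fin.succ_ne_zero i).symm] using hu 0 i.succ
    have hu' (i j : Fin n) : D i.succ (u j.succ) = if i = j then 1 else 0 := by
      simpa using hu i.succ j.succ
    rw [sum_mul_prod_pow_fin_succ] at h
    have hslice := (D 0).eq_zero_of_sum_mul_pow_eq_zero hp hchar (by simpa using hu 0 0) le_rfl _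
      (fun k => by simp [(D 0).map_sum_mul_prod_pow hu0, hc]) h
    have hcons (k : Fin p) : (fun a => c (Fin.cons k a)) = 0 :=
      ih (fun i => D i.succ) (fun i => u i.succ) hu' _ (fun a j => hc _ _) (congrFun hslice k)
    funext a
    simpa using congrFun (hcons (a 0)) (Fin.tail a)

theorem exists_sum_mul_prod_pow_eq (hp : p.Prime) (hchar : (p : R) = 0) {n : ℕ}
    (D : Fin n → Derivation ℤ R R) (hcomm : ∀ i j, ∀ r : R, D i (D j r) = D j (D i r))
    (hpow : ∀ i, ∀ r : R, (⇑(D i))^[p] r = 0)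
    (u : Fin n → R) (hu : ∀ i j, D i (u j) = if i = j then 1 else 0) (r : R) :
    ∃ c : (Fin n → Fin p) → R,
      (∀ a j, D j (c a) = 0) ∧ r = ∑ a, c a * ∏ i, u i ^ (a i : ℕ) := by
  induction n generalizing r with
  | zero => exact ⟨fun _ => r, fun _ j => j.elim0, by simp⟩
  | succ n ih =>
    have hu0 (i : Fin n) : D 0 (u i.succ) = 0 := by
      simpa [(Fin.succ_ne_zero i).symm] using hu 0 i.succ
    have hu' (i j : Fin n) : D i.succ (u j.succ) = if i = j then 1 else 0 := by
      simpa using hu i.succ j.succ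
    obtain ⟨b, hb, hr⟩ := (D 0).exists_sum_mul_pow_eq_of_iterate_eq_zero hp hchar
      (by simpa using hu 0 0) le_rfl r (hpow 0 r)
    choose c hc hbc using fun k => ih (fun i => D i.succ) (fun i j => hcomm _ _)
      (fun i => hpow i.succ) (fun i => u i.succ) hu' (b k)
    -- the `D 0`-derivatives of the coefficients of `b k` are the coefficients of `D 0 (b k) = 0`
    have hc0 (k : Fin p) : (fun a => D 0 (c k a)) = 0 :=
      eq_zero_of_sum_mul_prod_pow_eq_zero hp hchar _ _ hu' _
        (fun a j => show D j.succ (D 0 (c k a)) = 0 by rw [hcomm, hc, map_zero])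
        (by rw [← (D 0).map_sum_mul_prod_pow hu0, ← hbc, hb])
    refine ⟨fun a => c (a 0) (Fin.tail a),
      fun a j => Fin.cases (congrFun (hc0 (a 0)) (Fin.tail a)) (fun j => hc _ _ j) j, ?_⟩
    rw [sum_mul_prod_pow_fin_succ, hr]
    simp [← hbc]

end Monomials

/-- **Jacobson's theorem on rings of constants.** Let `R` be a commutative ring with
`p · 1 = 0` for a prime `p`, and let `D₁, …, Dₙ` be pairwise commuting derivations of `R`
with `Dᵢᵖ = 0`, admitting elements `u₁, …, uₙ` with `Dᵢ(uⱼ) = δᵢⱼ`. Then each `uᵢᵖ` is a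
constant (killed by all the `Dⱼ`), and every element of `R` is uniquely a combination of
the monomials `u₁^{a₁} ⋯ uₙ^{aₙ}` (`0 ≤ aᵢ ≤ p - 1`) with constant coefficients; that is,
`R` is free of rank `pⁿ` over its subring of constants, with the monomials as basis. -/
theorem free_over_constants_of_commuting_derivations
    (p : ℕ) (hp : p.Prime) (R : Type*) [CommRing R] (hchar : (p : R) = 0)
    (n : ℕ) (D : Fin n → Derivation ℤ R R)
    (hcomm : ∀ i j, ∀ r : R, D i (D j r) = D j (D i r))
    (hpow : ∀ i, ∀ r : R, (⇑(D i))^[p] r = 0)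
    (u : Fin n → R) (hu : ∀ i j, D i (u j) = if i = j then 1 else 0) :
    (∀ i j, D j (u i ^ p) = 0) ∧
    ∀ r : R, ∃! c : (Fin n → Fin p) → R,
      (∀ (a : Fin n → Fin p) (j : Fin n), D j (c a) = 0) ∧
      r = ∑ a : Fin n → Fin p, c a * ∏ i, u i ^ (a i : ℕ) := by
  refine ⟨fun i j => by rw [Derivation.leibniz_pow, nsmul_eq_mul, hchar, zero_mul], fun r => ?_⟩
  obtain ⟨c, hc, hr⟩ := exists_sum_mul_prod_pow_eq hp hchar D hcomm hpow u hu r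
  refine ⟨c, ⟨hc, hr⟩, fun c' ⟨hc', hr'⟩ => sub_eq_zero.mp ?_⟩
  refine eq_zero_of_sum_mul_prod_pow_eq_zero hp hchar D u hu _ (fun a j => by simp [hc, hc']) ?_
  simp [sub_mul, sum_sub_distrib, ← hr, ← hr']
end

section
/- Equip ℚ¹² with the symmetric bilinear form B(u, v) = −2·Σᵢ uᵢvᵢ, and let M ⊂ ℚ¹² be the subgroup generated by the standard basis vectors e₁, …, e₁₂ together with ½(e₁ + ⋯ + e₁₂). Let L be a subgroup of ℚ¹² containing M such that B(x, x) ∈ 2ℤ for every x ∈ L. Then L is generated, as an abelian group, by M together with the set {x ∈ L : B(x, x) = −2}. -/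
open scoped BigOperators

/-- The bilinear form `B(u, v) = -2 ∑ uᵢ vᵢ` on `ℚ¹²`. -/
noncomputable def Bform (u v : Fin 12 → ℚ) : ℚ := -2 * ∑ i, u i * v i

/-- The lattice `M = ⊕ᵢ ℤ eᵢ + ℤ · ½ ∑ eᵢ` inside `ℚ¹²`, i.e. the subgroup generated by the
standard basis vectors together with `(1/2, …, 1/2)`. -/
noncomputable def Mlat : AddSubgroup (Fin 12 → ℚ) :=
  AddSubgroup.closure
    ((Set.range fun i : Fin 12 => (Pi.single i 1 : Fin 12 → ℚ)) ∪
      {fun _ : Fin 12 => (1 / 2 : ℚ)})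

lemma single_mem_Mlat (i : Fin 12) : (Pi.single i 1 : Fin 12 → ℚ) ∈ Mlat :=
  AddSubgroup.subset_closure (Or.inl ⟨i, rfl⟩)

lemma half_mem_Mlat : (fun _ : Fin 12 => (1 / 2 : ℚ)) ∈ Mlat :=
  AddSubgroup.subset_closure (Or.inr rfl)

lemma int_mem_Mlat (x : Fin 12 → ℚ) (hx : ∀ i, ∃ k : ℤ, x i = k) : x ∈ Mlat := by
  choose k hk using hx
  have hxe : x = ∑ i, (k i) • (Pi.single i 1 : Fin 12 → ℚ) := by
    funext j
    rw [Finset.sum_apply]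
    have : ∀ i, (k i • (Pi.single i 1 : Fin 12 → ℚ)) j
        = if j = i then (k i : ℚ) else 0 := by
      intro i
      simp [Pi.single_apply]
    simp only [this, Finset.sum_ite_eq, Finset.mem_univ, if_true, hk]
  rw [hxe]
  exact AddSubgroup.sum_mem _ fun i _ => AddSubgroup.zsmul_mem _ (single_mem_Mlat i) _

lemma sum_sq_add_single (x : Fin 12 → ℚ) (i : Fin 12) :
    ∑ j, (x j + (Pi.single i 1 : Fin 12 → ℚ) j) * (x j + (Pi.single i 1 : Fin 12 → ℚ) j)
      = (∑ j, x j * x j) + 2 * x i + 1 := by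
  have h : ∀ j, (x j + (Pi.single i 1 : Fin 12 → ℚ) j) * (x j + (Pi.single i 1 : Fin 12 → ℚ) j)
      = x j * x j + ((2 * x j) * (Pi.single i 1 : Fin 12 → ℚ) j
        + (Pi.single i 1 : Fin 12 → ℚ) j * (Pi.single i 1 : Fin 12 → ℚ) j) := fun j => by ring
  rw [Finset.sum_congr rfl (fun j _ => h j), Finset.sum_add_distrib, Finset.sum_add_distrib]
  have h1 : ∑ j, (2 * x j) * (Pi.single i 1 : Fin 12 → ℚ) j = 2 * x i := by
    simp [Pi.single_apply, mul_ite]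
  have h2 : ∑ j, (Pi.single i 1 : Fin 12 → ℚ) j * (Pi.single i 1 : Fin 12 → ℚ) j = 1 := by
    simp [Pi.single_apply, ite_mul]
  rw [h1, h2]; ring

/-- Coordinates of an even vector are half-integers. -/
lemma half_int (L : AddSubgroup (Fin 12 → ℚ)) (hML : Mlat ≤ L)
    (heven : ∀ x ∈ L, ∃ n : ℤ, Bform x x = 2 * (n : ℚ))
    (x : Fin 12 → ℚ) (hx : x ∈ L) (i : Fin 12) :
    ∃ m : ℤ, x i = (m : ℚ) / 2 := by
  obtain ⟨n₀, h₀⟩ := heven x hx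
  obtain ⟨n₁, h₁⟩ := heven (x + Pi.single i 1)
    (AddSubgroup.add_mem _ hx (hML (single_mem_Mlat i)))
  rw [Bform] at h₀ h₁
  simp only [Pi.add_apply] at h₁
  rw [sum_sq_add_single] at h₁
  refine ⟨n₀ - n₁ - 1, ?_⟩
  push_cast
  nlinarith [h₀, h₁]

lemma card_odd_dvd (m : Fin 12 → ℤ) (n : ℤ) (h : ∑ i, m i * m i = -4 * n) :
    4 ∣ (Finset.univ.filter (fun i => Odd (m i))).card := by
  have h2 : ∀ i : Fin 12, ((m i : ZMod 4) * (m i : ZMod 4))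
      = if Odd (m i) then 1 else 0 := by
    intro i
    rcases Int.even_or_odd (m i) with ⟨k, hk⟩ | ⟨k, hk⟩
    · rw [if_neg (by rw [hk]; exact (Int.not_odd_iff_even).mpr ⟨k, rfl⟩), hk]
      push_cast
      ring_nf
      rw [show (4 : ZMod 4) = 0 by decide]
      ring
    · rw [if_pos (by rw [hk]; exact ⟨k, rfl⟩), hk]
      push_cast
      ring_nf
      rw [show (4 : ZMod 4) = 0 by decide]
      ring
  have hsum : ((∑ i, m i * m i : ℤ) : ZMod 4)
      = ((Finset.univ.filter (fun i => Odd (m i))).card : ZMod 4) := by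
    push_cast
    rw [Finset.sum_congr rfl (fun i _ => h2 i), Finset.sum_boole]
  have hz : ((Finset.univ.filter (fun i => Odd (m i))).card : ZMod 4) = 0 := by
    rw [← hsum, h]
    push_cast
    rw [show (-4 : ZMod 4) = 0 by decide]
    ring
  exact (ZMod.natCast_eq_zero_iff _ _).mp hz

/-- If the odd set has exactly four elements, `x` decomposes as (integer vector) + root. -/
lemma root_case (L : AddSubgroup (Fin 12 → ℚ)) (hML : Mlat ≤ L)
    (x : Fin 12 → ℚ) (hx : x ∈ L) (m : Fin 12 → ℤ) (hm : ∀ i, x i = (m i : ℚ) / 2)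
    (hcard : (Finset.univ.filter (fun i => Odd (m i))).card = 4) :
    x ∈ AddSubgroup.closure
      ((Mlat : Set (Fin 12 → ℚ)) ∪ {y : Fin 12 → ℚ | y ∈ L ∧ Bform y y = -2}) := by
  set r : Fin 12 → ℚ := fun i => if Odd (m i) then 1 / 2 else 0 with hr
  have hxr : x - r ∈ Mlat := by
    apply int_mem_Mlat
    intro i
    rcases Int.even_or_odd (m i) with ⟨k, hk⟩ | ⟨k, hk⟩
    · refine ⟨k, ?_⟩
      have hri : r i = 0 := by
        show (if Odd (m i) then (1/2 : ℚ) else 0) = 0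
        rw [if_neg ((Int.not_odd_iff_even).mpr ⟨k, hk⟩)]
      rw [Pi.sub_apply, hm i, hri, hk]
      push_cast
      ring
    · refine ⟨k, ?_⟩
      have hri : r i = 1/2 := by
        show (if Odd (m i) then (1/2 : ℚ) else 0) = 1/2
        rw [if_pos ⟨k, hk⟩]
      rw [Pi.sub_apply, hm i, hri, hk]
      push_cast
      ring
  have hBr : Bform r r = -2 := by
    rw [Bform]
    have : ∀ i, r i * r i = if Odd (m i) then (1/4 : ℚ) else 0 := by
      intro i
      simp only [hr]
      split_ifs <;> norm_num
    rw [Finset.sum_congr rfl (fun i _ => this i), ← Finset.sum_filter, Finset.sum_const, hcard]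
    norm_num
  have hrL : r ∈ L := by
    have h1 : x - (x - r) ∈ L := AddSubgroup.sub_mem _ hx (hML hxr)
    rwa [sub_sub_cancel] at h1
  have hrC : r ∈ AddSubgroup.closure
      ((Mlat : Set (Fin 12 → ℚ)) ∪ {y : Fin 12 → ℚ | y ∈ L ∧ Bform y y = -2}) :=
    AddSubgroup.subset_closure (Or.inr ⟨hrL, hBr⟩)
  have hxrC : x - r ∈ AddSubgroup.closure
      ((Mlat : Set (Fin 12 → ℚ)) ∪ {y : Fin 12 → ℚ | y ∈ L ∧ Bform y y = -2}) :=
    AddSubgroup.subset_closure (Or.inl hxr)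
  have := AddSubgroup.add_mem _ hxrC hrC
  rwa [sub_add_cancel] at this

/-- **Even overlattices of `M`.** Any subgroup `L` of `ℚ¹²` containing `M` on which the form
`B` takes even integral values on the diagonal is generated by `M` together with its
vectors of square `-2`. -/
theorem even_superlattice_of_M_generated_by_roots
    (L : AddSubgroup (Fin 12 → ℚ)) (hML : Mlat ≤ L)
    (heven : ∀ x ∈ L, ∃ n : ℤ, Bform x x = 2 * (n : ℚ)) :
    L = AddSubgroup.closure
      ((Mlat : Set (Fin 12 → ℚ)) ∪ {x : Fin 12 → ℚ | x ∈ L ∧ Bform x x = -2}) := by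
  apply le_antisymm
  · intro x hx
    choose m hm using half_int L hML heven x hx
    obtain ⟨n, hn⟩ := heven x hx
    have hmm : ∑ i, m i * m i = -4 * n := by
      rw [Bform] at hn
      have hsum : (∑ i, x i * x i) = ((∑ i, m i * m i : ℤ) : ℚ) / 4 := by
        push_cast
        rw [Finset.sum_div]
        refine Finset.sum_congr rfl fun i _ => ?_
        rw [hm i]; ring
      rw [hsum] at hn
      have : ((∑ i, m i * m i : ℤ) : ℚ) = ((-4 * n : ℤ) : ℚ) := by
        push_cast [-Int.cast_sum]
        linarith
      exact_mod_cast this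
    obtain ⟨c, hc⟩ := card_odd_dvd m n hmm
    have hcle : (Finset.univ.filter (fun i => Odd (m i))).card ≤ 12 :=
      (Finset.card_filter_le _ _).trans_eq (by simp)
    have hc3 : c ≤ 3 := by omega
    interval_cases c
    · -- card = 0 : x is an integer vector
      simp only [mul_zero] at hc
      have hall : ∀ i, ¬ Odd (m i) := by
        intro i
        have := Finset.card_eq_zero.mp hc
        intro hodd
        have : i ∈ Finset.univ.filter (fun i => Odd (m i)) := by
          simp [hodd]
        rw [Finset.card_eq_zero.mp hc] at this
        exact absurd this (Finset.notMem_empty i)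
      refine AddSubgroup.subset_closure (Or.inl (int_mem_Mlat x fun i => ?_))
      obtain ⟨k, hk⟩ := (Int.not_odd_iff_even).mp (hall i)
      exact ⟨k, by rw [hm i, hk]; push_cast; ring⟩
    · exact root_case L hML x hx m hm (by omega)
    · -- card = 8 : use x - (1/2,…,1/2)
      have hyL : x - (fun _ : Fin 12 => (1/2 : ℚ)) ∈ L :=
        AddSubgroup.sub_mem _ hx (hML half_mem_Mlat)
      have hym : ∀ i, (x - fun _ : Fin 12 => (1/2 : ℚ)) i = ((m i - 1 : ℤ) : ℚ) / 2 := by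
        intro i
        simp only [Pi.sub_apply, hm i]
        push_cast
        ring
      have hiff : ∀ i : Fin 12, Odd (m i - 1) ↔ ¬ Odd (m i) := by
        intro i
        constructor
        · intro ⟨k, hk⟩ ⟨l, hl⟩; omega
        · intro h
          obtain ⟨k, hk⟩ := Int.not_odd_iff_even.mp h
          exact ⟨k - 1, by omega⟩
      have hcard' : (Finset.univ.filter (fun i => Odd (m i - 1))).card = 4 := by
        have h1 : (Finset.univ.filter (fun i => Odd (m i - 1)))
            = Finset.univ.filter (fun i => ¬ Odd (m i)) := by
          apply Finset.filter_congr
          intro i _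
          simp [hiff i]
        rw [h1]
        have h2 := Finset.card_filter_add_card_filter_not
          (s := (Finset.univ : Finset (Fin 12))) (p := fun i => Odd (m i))
        have h3 : (Finset.univ : Finset (Fin 12)).card = 12 := by simp
        omega
      have hyC := root_case L hML _ hyL (fun i => m i - 1) hym hcard'
      have hhC : (fun _ : Fin 12 => (1/2 : ℚ)) ∈ AddSubgroup.closure
          ((Mlat : Set (Fin 12 → ℚ)) ∪ {y : Fin 12 → ℚ | y ∈ L ∧ Bform y y = -2}) :=
        AddSubgroup.subset_closure (Or.inl half_mem_Mlat)
      have := AddSubgroup.add_mem _ hyC hhC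
      rwa [sub_add_cancel] at this
    · -- card = 12 : all coordinates half-odd-integers, x ∈ Mlat
      have hall : ∀ i, Odd (m i) := by
        intro i
        have : (Finset.univ.filter (fun i => Odd (m i))) = Finset.univ := by
          apply Finset.eq_univ_of_card
          simpa using hc
        have hi : i ∈ Finset.univ.filter (fun i => Odd (m i)) := by
          rw [this]; exact Finset.mem_univ i
        exact (Finset.mem_filter.mp hi).2
      have hxM : x ∈ Mlat := by
        have h1 : x - (fun _ : Fin 12 => (1/2 : ℚ)) ∈ Mlat := by
          apply int_mem_Mlat
          intro i
          obtain ⟨k, hk⟩ := hall i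
          refine ⟨k, ?_⟩
          simp only [Pi.sub_apply, hm i, hk]
          push_cast
          ring
        have := AddSubgroup.add_mem _ h1 half_mem_Mlat
        rwa [sub_add_cancel] at this
      exact AddSubgroup.subset_closure (Or.inl hxM)
  · rw [AddSubgroup.closure_le]
    exact Set.union_subset hML fun y hy => hy.1
end

section
/- Let G be the 10×10 integer matrix with G_{ii} = −2 for all i, G_{ij} = 1 whenever {i, j} is one of the pairs {1,2}, {2,4}, {3,4}, {4,5}, {5,6}, {6,7}, {7,8}, {8,9}, {9,10}, and G_{ij} = 0 otherwise (the Gram matrix of the even unimodular lattice E₁₀(−1) of signature (1,9) attached to the T_{2,3,7} Dynkin diagram). Equip ℚ¹⁰ with the symmetric bilinear form B whose Gram matrix on the standard basis is 2G, and set E(2) = ℤ¹⁰ ⊂ ℚ¹⁰. If L is a subgroup of ℚ¹⁰ with E(2) ⊆ L, E(2) ≠ L, the quotient L/E(2) finite, and B(x, x) ∈ 2ℤ for every x ∈ L, then L is generated as an abelian group by E(2) together with the set {x ∈ L : B(x, x) = −2}. -/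
open scoped BigOperators

/-- The Gram matrix of the even unimodular lattice `E₁₀(-1)` of signature `(1,9)`,
attached to the `T_{2,3,7}` Dynkin diagram (with `0`-indexed vertices: the pairs of
adjacent vertices are `{0,1}, {1,3}, {2,3}, {3,4}, {4,5}, {5,6}, {6,7}, {7,8}, {8,9}`). -/
def E10Gram (i j : Fin 10) : ℤ :=
  if i = j then -2
  else if ({i, j} : Finset (Fin 10)) ∈
      ([{0, 1}, {1, 3}, {2, 3}, {3, 4}, {4, 5}, {5, 6}, {6, 7}, {7, 8}, {8, 9}] :
        List (Finset (Fin 10))) then 1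
  else 0

/-- The bilinear form on `ℚ¹⁰` whose Gram matrix on the standard basis is `2 · E10Gram`,
i.e. the form of the lattice `E(2) = E₁₀(-1)(2)`. -/
noncomputable def BE2 (u v : Fin 10 → ℚ) : ℚ :=
  ∑ i, ∑ j, u i * v j * ((2 * E10Gram i j : ℤ) : ℚ)

/-- The lattice `E(2) = ℤ¹⁰ ⊂ ℚ¹⁰`. -/
noncomputable def E2lat : AddSubgroup (Fin 10 → ℚ) :=
  AddSubgroup.closure (Set.range fun i : Fin 10 => (Pi.single i 1 : Fin 10 → ℚ))

/-!
Pairing `x ∈ L` with the basis vectors `eⱼ` of `E(2)` and using evenness gives `B(x, eⱼ) ∈ ℤ`;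
as `E₁₀` is unimodular this forces `w = 2x ∈ ℤ¹⁰`, and `B(x, x) ∈ 2ℤ` says `w² ≡ 0 mod 4` in
`E₁₀`. If `w ∉ 2ℤ¹⁰`, it suffices to find `u ≡ w mod 2ℤ¹⁰` with `u² = -4`: then `u / 2` is a
root of `L` congruent to `x` modulo `E(2)`.

Such `u` exist in every even lattice containing a hyperbolic pair `f, g` (`f² = g² = 0`,
`f·g = 1`), as long as some vector pairs oddly with `w`. Moving `w` by `2(s f + t g)` replaces
the coordinates `c₁ = w·g`, `c₂ = w·f` by `c₁ + 2s`, `c₂ + 2t` and changes `w²` by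
`2((c₁ + 2s)(c₂ + 2t) - c₁c₂)`, so any target `≡ w² mod 4` is reached when one of `c₁, c₂` is odd,
and any target `≡ w² mod 8` when both are even. In the latter case, moving `w` by twice a vector
of `⟨f, g⟩^⊥` pairing oddly with `w` changes `w²` by `4 mod 8`.
-/

open Matrix

namespace LinearMap.BilinForm

variable {M : Type*} [AddCommGroup M] {B : LinearMap.BilinForm ℤ M}

theorem even_apply_self_of_mem_span (hB : B.IsSymm) {s : Set M} (hs : ∀ b ∈ s, Even (B b b))
    {x : M} (hx : x ∈ Submodule.span ℤ s) : Even (B x x) := by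
  induction hx using Submodule.span_induction with
  | mem b hb => exact hs b hb
  | zero => simp
  | add x y _ _ hx hy =>
    simp only [map_add, LinearMap.add_apply, hB.eq y x]
    rw [show B x x + B x y + (B x y + B y y) = B x x + B y y + 2 * B x y by ring]
    exact (hx.add hy).add (even_two_mul _)
  | smul a x _ hx =>
    simp only [map_zsmul, LinearMap.smul_apply, smul_eq_mul]
    exact (hx.mul_left a).mul_left a

theorem apply_add_two_smul_self (hB : B.IsSymm) (v y : M) :
    B (v + 2 • y) (v + 2 • y) = B v v + 4 * B v y + 4 * B y y := by
  simp only [map_add, map_nsmul, LinearMap.add_apply, LinearMap.smul_apply, nsmul_eq_mul,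
    hB.eq y v]
  push_cast
  ring

section HyperbolicPair

variable {f g : M}

theorem apply_hyperbolic_self (hB : B.IsSymm) (hf : B f f = 0) (hg : B g g = 0)
    (hfg : B f g = 1) (s t : ℤ) :
    B (s • f + t • g) (s • f + t • g) = 2 * s * t := by
  simp only [map_add, map_zsmul, LinearMap.add_apply, LinearMap.smul_apply, smul_eq_mul,
    hf, hg, hfg, hB.eq g f]
  ring

theorem exists_apply_add_two_smul_eq_of_odd (hB : B.IsSymm) (hf : B f f = 0) (hg : B g g = 0)
    (hfg : B f g = 1) {v : M} (hv : Odd (B v g))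
    {T : ℤ} (hT : T ≡ B v v [ZMOD 4]) : ∃ y, B (v + 2 • y) (v + 2 • y) = T := by
  obtain ⟨j, hj⟩ := hv
  obtain ⟨k, hk⟩ := hT.dvd
  refine ⟨(-j) • f + (j * B v f - k) • g, ?_⟩
  rw [apply_add_two_smul_self hB, apply_hyperbolic_self hB hf hg hfg]
  simp only [map_add, map_zsmul, smul_eq_mul, hj]
  linear_combination hk

theorem exists_apply_add_two_smul_eq_of_even (hB : B.IsSymm) (hf : B f f = 0) (hg : B g g = 0)
    (hfg : B f g = 1) {v : M} (hvf : Even (B v f))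
    (hvg : Even (B v g)) {T : ℤ} (hT : T ≡ B v v [ZMOD 8]) :
    ∃ y, B (v + 2 • y) (v + 2 • y) = T := by
  obtain ⟨a, ha⟩ := hvf
  obtain ⟨b, hb⟩ := hvg
  obtain ⟨k, hk⟩ := hT.dvd
  refine ⟨(1 - b) • f + (a * b - a - k) • g, ?_⟩
  rw [apply_add_two_smul_self hB, apply_hyperbolic_self hB hf hg hfg]
  simp only [map_add, map_zsmul, smul_eq_mul, ha, hb]
  linear_combination hk

theorem exists_apply_add_two_smul_eq (hB : B.IsSymm) (heven : ∀ x, Even (B x x))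
    (hf : B f f = 0) (hg : B g g = 0) (hfg : B f g = 1) {v : M} (hv : ∃ z, Odd (B v z))
    {T : ℤ} (hT : T ≡ B v v [ZMOD 4]) : ∃ y, B (v + 2 • y) (v + 2 • y) = T := by
  rcases Int.even_or_odd (B v g) with hvg | hvg
  swap
  · exact exists_apply_add_two_smul_eq_of_odd hB hf hg hfg hvg hT
  rcases Int.even_or_odd (B v f) with hvf | hvf
  swap
  · exact exists_apply_add_two_smul_eq_of_odd hB hg hf ((hB.eq g f).trans hfg) hvf hT
  obtain ⟨z, hz⟩ := hv
  -- the component of `z` orthogonal to the hyperbolic plane spanned by `f` and `g`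
  set p := z - B z g • f - B z f • g
  have hpf : B p f = 0 := by simp [p, hf, hB.eq g f, hfg]
  have hpg : B p g = 0 := by simp [p, hg, hfg]
  have hvp : Odd (B v p) := by
    have : B v p = B v z - B z g * B v f - B z f * B v g := by simp [p]
    rw [this]
    exact (hz.sub_even (hvf.mul_left _)).sub_even (hvg.mul_left _)
  by_cases h8 : T ≡ B v v [ZMOD 8]
  · exact exists_apply_add_two_smul_eq_of_even hB hf hg hfg hvf hvg h8
  have h8' : T ≡ B (v + 2 • p) (v + 2 • p) [ZMOD 8] := by
    rw [apply_add_two_smul_self hB]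
    obtain ⟨a, ha⟩ := hvp
    obtain ⟨b, hb⟩ := heven p
    unfold Int.ModEq at *
    omega
  obtain ⟨y, hy⟩ := exists_apply_add_two_smul_eq_of_even hB hf hg hfg
    (by simpa [hpf] using hvf) (by simpa [hpg] using hvg) h8'
  exact ⟨p + y, by rwa [smul_add, ← add_assoc]⟩

end HyperbolicPair

end LinearMap.BilinForm

theorem Matrix.exists_odd_toBilin'_of_mul_eq_one {n : Type*} [Fintype n] [DecidableEq n]
    {A H : Matrix n n ℤ} (hAH : A * H = 1) {w : n → ℤ} (hw : ∃ i, Odd (w i)) :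
    ∃ z, Odd (A.toBilin' w z) := by
  by_contra! h
  obtain ⟨i, hi⟩ := hw
  have hwA : ∀ j, Even ((w ᵥ* A) j) := fun j => by
    simpa [toBilin'_apply', mulVec_single_one, dotProduct_mulVec, vecMul, dotProduct] using
      h (Pi.single j 1)
  rw [← vecMul_one w, ← hAH, ← vecMul_vecMul] at hi
  exact Int.not_odd_iff_even.2 (Finset.even_sum _ fun j _ => (hwA j).mul_right _) hi

def E10GramInv : Matrix (Fin 10) (Fin 10) ℤ :=
  !![4, 9, 7, 14, 12, 10, 8, 6, 4, 2;
    9, 18, 14, 28, 24, 20, 16, 12, 8, 4;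
    7, 14, 10, 21, 18, 15, 12, 9, 6, 3;
    14, 28, 21, 42, 36, 30, 24, 18, 12, 6;
    12, 24, 18, 36, 30, 25, 20, 15, 10, 5;
    10, 20, 15, 30, 25, 20, 16, 12, 8, 4;
    8, 16, 12, 24, 20, 16, 12, 9, 6, 3;
    6, 12, 9, 18, 15, 12, 9, 6, 4, 2;
    4, 8, 6, 12, 10, 8, 6, 4, 2, 1;
    2, 4, 3, 6, 5, 4, 3, 2, 1, 0]

theorem E10Gram_mul_inv : Matrix.of E10Gram * E10GramInv = 1 := by
  decide

theorem E10Gram_isSymm : (Matrix.of E10Gram).IsSymm :=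
  IsSymm.ext (by decide : ∀ i j : Fin 10, E10Gram j i = E10Gram i j)

def E10Form : LinearMap.BilinForm ℤ (Fin 10 → ℤ) := (Matrix.of E10Gram).toBilin'

theorem E10Form_isSymm : E10Form.IsSymm :=
  isSymm_toBilin'_iff_isSymm.2 E10Gram_isSymm

theorem E10Form_apply_self_even (x : Fin 10 → ℤ) : Even (E10Form x x) := by
  refine LinearMap.BilinForm.even_apply_self_of_mem_span E10Form_isSymm ?_
    (s := Set.range (Pi.basisFun ℤ (Fin 10))) (by rw [Module.Basis.span_eq]; trivial)
  rintro _ ⟨i, rfl⟩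
  rw [Pi.basisFun_apply, E10Form, toBilin'_single, of_apply]
  revert i
  decide

/-- The null root of the affine `E₈` subdiagram on the vertices `0, …, 8`; together with
`E10NullRootDual = E10NullRoot + e₉` it spans the hyperbolic plane complementary to `E₈`. -/
def E10NullRoot : Fin 10 → ℤ := ![2, 4, 3, 6, 5, 4, 3, 2, 1, 0]

def E10NullRootDual : Fin 10 → ℤ := ![2, 4, 3, 6, 5, 4, 3, 2, 1, 1]

theorem E10Form_nullRoot_self : E10Form E10NullRoot E10NullRoot = 0 := by
  rw [E10Form, toBilin'_apply']
  decide

theorem E10Form_nullRootDual_self : E10Form E10NullRootDual E10NullRootDual = 0 := by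
  rw [E10Form, toBilin'_apply']
  decide

theorem E10Form_nullRoot_nullRootDual : E10Form E10NullRoot E10NullRootDual = 1 := by
  rw [E10Form, toBilin'_apply']
  decide

theorem E10Form_exists_add_two_smul_eq_neg_four {w : Fin 10 → ℤ} (hw : ∃ i, Odd (w i))
    (h4 : 4 ∣ E10Form w w) : ∃ y, E10Form (w + 2 • y) (w + 2 • y) = -4 :=
  LinearMap.BilinForm.exists_apply_add_two_smul_eq E10Form_isSymm E10Form_apply_self_even
    E10Form_nullRoot_self E10Form_nullRootDual_self E10Form_nullRoot_nullRootDual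
    (exists_odd_toBilin'_of_mul_eq_one E10Gram_mul_inv hw)
    (Int.ModEq.symm ((Int.modEq_zero_iff_dvd.2 h4).trans (by decide)))

def E10GramRat : Matrix (Fin 10) (Fin 10) ℚ := (Matrix.of E10Gram).map (↑)

theorem BE2_eq_toBilin' (x y : Fin 10 → ℚ) : BE2 x y = 2 * E10GramRat.toBilin' x y := by
  simp only [BE2, E10GramRat, toBilin'_apply, Finset.mul_sum, map_apply,
    of_apply]
  push_cast
  exact Finset.sum_congr rfl fun i _ => Finset.sum_congr rfl fun j _ => by ring

theorem BE2_add_self (x y : Fin 10 → ℚ) :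
    BE2 (x + y) (x + y) = BE2 x x + 2 * BE2 x y + BE2 y y := by
  have hsymm : E10GramRat.toBilin'.IsSymm :=
    isSymm_toBilin'_iff_isSymm.2 (E10Gram_isSymm.map _)
  simp only [BE2_eq_toBilin', map_add, LinearMap.add_apply, hsymm.eq y x]
  ring

theorem BE2_single (x : Fin 10 → ℚ) (j : Fin 10) :
    BE2 x (Pi.single j 1) = 2 * (x ᵥ* E10GramRat) j := by
  simp [BE2_eq_toBilin', toBilin'_apply', vecMul, dotProduct]

theorem BE2_two_inv_smul_intCast (w : Fin 10 → ℤ) :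
    BE2 ((2⁻¹ : ℚ) • (Int.cast ∘ w)) ((2⁻¹ : ℚ) • (Int.cast ∘ w)) = E10Form w w / 2 := by
  simp only [BE2_eq_toBilin', map_smul, LinearMap.smul_apply, smul_eq_mul, E10Form,
    toBilin'_apply, E10GramRat, map_apply, Function.comp_apply]
  push_cast
  ring

theorem exists_BE2_eq_intCast {L : AddSubgroup (Fin 10 → ℚ)}
    (heven : ∀ x ∈ L, ∃ n : ℤ, BE2 x x = 2 * (n : ℚ)) {x y : Fin 10 → ℚ} (hx : x ∈ L)
    (hy : y ∈ L) : ∃ c : ℤ, BE2 x y = c := by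
  obtain ⟨a, ha⟩ := heven _ (add_mem hx hy)
  obtain ⟨b, hb⟩ := heven x hx
  obtain ⟨c, hc⟩ := heven y hy
  refine ⟨a - b - c, ?_⟩
  rw [BE2_add_self] at ha
  push_cast
  linarith

theorem intCast_mem_E2lat (w : Fin 10 → ℤ) : (Int.cast ∘ w : Fin 10 → ℚ) ∈ E2lat := by
  rw [← Finset.univ_sum_single (Int.cast ∘ w)]
  refine sum_mem fun j _ => ?_
  rw [Function.comp_apply, ← zsmul_one, Pi.single_smul]
  exact zsmul_mem (AddSubgroup.subset_closure (Set.mem_range_self j)) _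

theorem two_inv_smul_intCast_mem_E2lat {w : Fin 10 → ℤ} (hw : ∀ i, Even (w i)) :
    (2⁻¹ : ℚ) • (Int.cast ∘ w) ∈ E2lat := by
  choose k hk using hw
  convert intCast_mem_E2lat k using 1
  ext i
  simp only [Pi.smul_apply, Function.comp_apply, hk, Int.cast_add, smul_eq_mul]
  ring

theorem two_inv_smul_intCast_add_two_smul (w y : Fin 10 → ℤ) :
    (2⁻¹ : ℚ) • (Int.cast ∘ (w + 2 • y)) =
      (2⁻¹ : ℚ) • (Int.cast ∘ w) + (Int.cast ∘ y : Fin 10 → ℚ) := by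
  ext i
  simp only [nsmul_eq_mul, Nat.cast_ofNat, Pi.smul_apply, Function.comp_apply, Pi.add_apply,
    Pi.mul_apply, Pi.ofNat_apply, Int.cast_add, Int.cast_mul, Int.cast_ofNat, smul_eq_mul]
  ring

theorem exists_eq_two_inv_smul_intCast {L : AddSubgroup (Fin 10 → ℚ)} (hEL : E2lat ≤ L)
    (heven : ∀ x ∈ L, ∃ n : ℤ, BE2 x x = 2 * (n : ℚ)) {x : Fin 10 → ℚ} (hx : x ∈ L) :
    ∃ w : Fin 10 → ℤ, x = (2⁻¹ : ℚ) • (Int.cast ∘ w) := by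
  choose c hc using fun j =>
    exists_BE2_eq_intCast heven hx (hEL (AddSubgroup.subset_closure ⟨j, rfl⟩))
  have hcx : (Int.cast ∘ c : Fin 10 → ℚ) = ((2 : ℚ) • x) ᵥ* E10GramRat := funext fun j => by
    simp [← hc, BE2_single, smul_vecMul]
  refine ⟨c ᵥ* E10GramInv, ?_⟩
  have hcast : (Int.cast ∘ (c ᵥ* E10GramInv) : Fin 10 → ℚ) =
      (Int.cast ∘ c) ᵥ* E10GramInv.map (↑) :=
    funext (RingHom.map_vecMul (Int.castRingHom ℚ) E10GramInv c)
  rw [hcast, hcx, vecMul_vecMul, E10GramRat, ← map_mul_intCast, E10Gram_mul_inv,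
    Matrix.map_one _ Int.cast_zero Int.cast_one, vecMul_one, smul_smul]
  norm_num

theorem even_superlattice_of_E2_generated_by_roots_general
    (L : AddSubgroup (Fin 10 → ℚ)) (hEL : E2lat ≤ L)
    (heven : ∀ x ∈ L, ∃ n : ℤ, BE2 x x = 2 * (n : ℚ)) :
    L = AddSubgroup.closure
      ((E2lat : Set (Fin 10 → ℚ)) ∪ {x : Fin 10 → ℚ | x ∈ L ∧ BE2 x x = -2}) := by
  refine le_antisymm (fun x hx => ?_)
    ((AddSubgroup.closure_le L).2 (Set.union_subset hEL fun _ h => h.1))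
  obtain ⟨w, rfl⟩ := exists_eq_two_inv_smul_intCast hEL heven hx
  by_cases hw : ∀ i, Even (w i)
  · exact AddSubgroup.subset_closure (Or.inl (two_inv_smul_intCast_mem_E2lat hw))
  simp only [not_forall, Int.not_even_iff_odd] at hw
  have h4 : 4 ∣ E10Form w w := by
    obtain ⟨n, hn⟩ := heven _ hx
    rw [BE2_two_inv_smul_intCast] at hn
    exact ⟨n, by exact_mod_cast (by linarith : (E10Form w w : ℚ) = 4 * n)⟩
  obtain ⟨y, hy⟩ := E10Form_exists_add_two_smul_eq_neg_four hw h4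
  have hyE := intCast_mem_E2lat y
  have hrL : (2⁻¹ : ℚ) • (Int.cast ∘ (w + 2 • y)) ∈ L := by
    rw [two_inv_smul_intCast_add_two_smul]
    exact add_mem hx (hEL hyE)
  have hr : BE2 ((2⁻¹ : ℚ) • (Int.cast ∘ (w + 2 • y))) ((2⁻¹ : ℚ) • (Int.cast ∘ (w + 2 • y))) =
      -2 := by
    rw [BE2_two_inv_smul_intCast, hy]
    norm_num
  rw [← add_sub_cancel_right ((2⁻¹ : ℚ) • (Int.cast ∘ w)) (Int.cast ∘ y : Fin 10 → ℚ),
    ← two_inv_smul_intCast_add_two_smul]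
  exact sub_mem (AddSubgroup.subset_closure (Or.inr ⟨hrL, hr⟩))
    (AddSubgroup.subset_closure (Or.inl hyE))

/-- **Even overlattices of `E(2)`.** If `L` is a subgroup of `ℚ¹⁰` properly containing
`E(2)` with finite quotient, on which the form `B` of `E(2)` is even integral on the
diagonal, then `L` is generated by `E(2)` together with its vectors of square `-2`. -/
theorem even_superlattice_of_E2_generated_by_roots
    (L : AddSubgroup (Fin 10 → ℚ)) (hEL : E2lat ≤ L) (hne : E2lat ≠ L)
    (hfin : Finite (L ⧸ E2lat.addSubgroupOf L))
    (heven : ∀ x ∈ L, ∃ n : ℤ, BE2 x x = 2 * (n : ℚ)) :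
    L = AddSubgroup.closure
      ((E2lat : Set (Fin 10 → ℚ)) ∪ {x : Fin 10 → ℚ | x ∈ L ∧ BE2 x x = -2}) :=
  even_superlattice_of_E2_generated_by_roots_general L hEL heven
end

section
/- Let k be an algebraically closed field of characteristic 2 and let 𝔤 be a 2-dimensional Lie algebra over k equipped with a restricted structure given by a map sq : 𝔤 → 𝔤 satisfying sq(c·x) = c²·sq(x), sq(x + y) = sq(x) + sq(y) + [x, y], and [sq(x), y] = [x, [x, y]] for all x, y ∈ 𝔤 and c ∈ k. Assume every element of 𝔤 is 2-closed, i.e. sq(x) ∈ k·x for all x ∈ 𝔤. Then 𝔤 has a basis {ξ, η} such that either (a) [ξ, η] = ξ, sq(ξ) = 0 and sq(η) = η (the restricted Lie algebra of the height-one part of the affine group of the line), or (b) [ξ, η] = 0 and sq(ξ) = sq(η) = 0 (the restricted Lie algebra of α₂ × α₂). -/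
/-!
If `[e, f] = 0` for a basis `{e, f}`, then `sq` is additive and Frobenius-semilinear on the span,
so `sq e = a • e`, `sq f = b • f` and 2-closedness of `e + t • f` gives `t² b = a t` for every `t`;
`t = 1` gives `b = a`, and any `t` with `t² ≠ t` then forces `a = 0`.
Otherwise `ξ = [e, f]` spans the derived algebra and some `η` has `[ξ, η] = ξ`. Now
`ad (sq ξ) = ad ξ ^ 2` kills `η`, which forces `sq ξ = 0`, while `ad (sq η) = ad η ^ 2` fixes `ξ`,
which forces `sq η = -η = η`.
-/

theorem exists_sq_ne_self (k : Type*) [CommRing k] [IsDomain k] [Infinite k] :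
    ∃ t : k, t ^ 2 ≠ t := by
  classical
  obtain ⟨t, ht⟩ := Infinite.exists_notMem_finset ({0, 1} : Finset k)
  refine ⟨t, fun h ↦ ht ?_⟩
  have : t * (t - 1) = 0 := by linear_combination h
  rcases mul_eq_zero.mp this with h0 | h1
  · simp [h0]
  · simp [sub_eq_zero.mp h1]

namespace LieAlgebra

variable {k 𝔤 : Type*} [Field k] [LieRing 𝔤] [LieAlgebra k 𝔤]

theorem exists_lie_eq_self_of_lie_ne_zero (B : Module.Basis (Fin 2) k 𝔤) (h : ⁅B 0, B 1⁆ ≠ 0) :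
    ∃ η : 𝔤, ⁅⁅B 0, B 1⁆, η⁆ = ⁅B 0, B 1⁆ := by
  obtain ⟨α, β, hξ⟩ : ∃ α β : k, ⁅B 0, B 1⁆ = α • B 0 + β • B 1 :=
    ⟨B.repr _ 0, B.repr _ 1, by rw [← Fin.sum_univ_two (fun i ↦ B.repr _ i • B i), B.sum_repr]⟩
  have hξ0 : ⁅α • B 0 + β • B 1, B 0⁆ = -β • ⁅B 0, B 1⁆ := by
    rw [add_lie, smul_lie, smul_lie, lie_self, ← lie_skew, smul_zero, zero_add, neg_smul, smul_neg]
  have hξ1 : ⁅α • B 0 + β • B 1, B 1⁆ = α • ⁅B 0, B 1⁆ := by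
    rw [add_lie, smul_lie, smul_lie, lie_self, smul_zero, add_zero]
  rw [hξ] at h ⊢
  by_cases hα : α = 0
  · have hβ : -β ≠ 0 := by
      rintro hβ
      rw [neg_eq_zero] at hβ
      exact h (by rw [hα, hβ, zero_smul, zero_smul, add_zero])
    exact ⟨(-β)⁻¹ • B 0, by rw [lie_smul, hξ0, hξ, smul_smul, inv_mul_cancel₀ hβ, one_smul]⟩
  · exact ⟨α⁻¹ • B 1, by rw [lie_smul, hξ1, hξ, smul_smul, inv_mul_cancel₀ hα, one_smul]⟩

theorem linearIndependent_of_lie_eq_self {ξ η : 𝔤} (hξ : ξ ≠ 0) (h : ⁅ξ, η⁆ = ξ) :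
    LinearIndependent k ![ξ, η] := by
  rw [LinearIndependent.pair_iff]
  intro s t hst
  have ht : t • ξ = 0 := by
    simpa [lie_add, lie_smul, h] using congrArg (fun z => ⁅ξ, z⁆) hst
  obtain rfl : t = 0 := (smul_eq_zero.mp ht).resolve_right hξ
  rw [zero_smul, add_zero] at hst
  exact ⟨(smul_eq_zero.mp hst).resolve_right hξ, rfl⟩

section Restricted

variable {sq : 𝔤 → 𝔤}

theorem sq_eq_zero_of_lie_eq_self (hsq_ad : ∀ x y : 𝔤, ⁅sq x, y⁆ = ⁅x, ⁅x, y⁆⁆)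
    {ξ η : 𝔤} {a : k} (h : ⁅ξ, η⁆ = ξ) (ha : sq ξ = a • ξ) : sq ξ = 0 :=
  calc sq ξ = ⁅sq ξ, η⁆ := by rw [ha, smul_lie, h]
    _ = 0 := by rw [hsq_ad, h, lie_self]

theorem sq_eq_neg_of_lie_eq_self (hsq_ad : ∀ x y : 𝔤, ⁅sq x, y⁆ = ⁅x, ⁅x, y⁆⁆)
    {ξ η : 𝔤} {d : k} (hξ : ξ ≠ 0) (h : ⁅ξ, η⁆ = ξ) (hd : sq η = d • η) : sq η = -η := by
  have hηξ : ⁅η, ξ⁆ = -ξ := by rw [← lie_skew, h]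
  have : (d + 1) • ξ = 0 := by
    have := hsq_ad η ξ
    rw [hd, smul_lie, hηξ, lie_neg, hηξ, neg_neg, smul_neg, neg_eq_iff_eq_neg] at this
    rw [add_smul, one_smul, this, neg_add_cancel]
  rw [hd, eq_neg_of_add_eq_zero_left ((smul_eq_zero.mp this).resolve_right hξ), neg_one_smul]

theorem sq_eq_zero_and_sq_eq_zero_of_lie_eq_zero
    (hsq_smul : ∀ (c : k) (x : 𝔤), sq (c • x) = (c ^ 2) • sq x)
    (hsq_add : ∀ x y : 𝔤, sq (x + y) = sq x + sq y + ⁅x, y⁆)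
    (hclosed : ∀ x : 𝔤, ∃ c : k, sq x = c • x)
    {e f : 𝔤} (hef : LinearIndependent k ![e, f]) (h : ⁅e, f⁆ = 0) {t : k} (ht : t ^ 2 ≠ t) :
    sq e = 0 ∧ sq f = 0 := by
  obtain ⟨a, ha⟩ := hclosed e
  obtain ⟨b, hb⟩ := hclosed f
  have key : ∀ s : k, s ^ 2 * b = a * s := by
    intro s
    obtain ⟨c, hc⟩ := hclosed (e + s • f)
    have : a • e + (s ^ 2 * b) • f = c • e + (c * s) • f := by
      rw [← ha, mul_smul, ← hb, ← hsq_smul, mul_smul, ← smul_add, ← hc, hsq_add, lie_smul, h,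
        smul_zero, add_zero]
    obtain ⟨rfl, hs⟩ := hef.eq_of_pair this
    exact hs
  obtain rfl : b = a := by simpa using key 1
  have hb0 : b = 0 := by
    have : b * (t ^ 2 - t) = 0 := by linear_combination key t
    exact (mul_eq_zero.mp this).resolve_right (sub_ne_zero.mpr ht)
  exact ⟨by rw [ha, hb0, zero_smul], by rw [hb, hb0, zero_smul]⟩

end Restricted

end LieAlgebra

/-- **Classification of 2-dimensional restricted Lie algebras all of whose elements are
2-closed.** Over an algebraically closed field `k` of characteristic `2`, a `2`-dimensional
restricted Lie algebra (`2`-Lie algebra) `𝔤` in which every element is `2`-closed has a basis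
`{ξ, η}` with either `[ξ,η] = ξ`, `sq ξ = 0`, `sq η = η` (the restricted Lie algebra of the
height-one part of the affine group of the line), or `[ξ,η] = 0`, `sq ξ = sq η = 0`
(the restricted Lie algebra of `α₂ × α₂`). -/
theorem two_dimensional_restricted_lie_algebra_all_two_closed
    {k : Type*} [Field k] [IsAlgClosed k] [CharP k 2]
    {𝔤 : Type*} [LieRing 𝔤] [LieAlgebra k 𝔤] [FiniteDimensional k 𝔤]
    (hdim : Module.finrank k 𝔤 = 2)
    (sq : 𝔤 → 𝔤)
    (hsq_smul : ∀ (c : k) (x : 𝔤), sq (c • x) = (c ^ 2) • sq x)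
    (hsq_add : ∀ x y : 𝔤, sq (x + y) = sq x + sq y + ⁅x, y⁆)
    (hsq_ad : ∀ x y : 𝔤, ⁅sq x, y⁆ = ⁅x, ⁅x, y⁆⁆)
    (hclosed : ∀ x : 𝔤, ∃ c : k, sq x = c • x) :
    ∃ b : Module.Basis (Fin 2) k 𝔤,
      (⁅b 0, b 1⁆ = b 0 ∧ sq (b 0) = 0 ∧ sq (b 1) = b 1) ∨
      (⁅b 0, b 1⁆ = 0 ∧ sq (b 0) = 0 ∧ sq (b 1) = 0) := by
  let B := Module.finBasisOfFinrankEq k 𝔤 hdim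
  by_cases habel : ⁅B 0, B 1⁆ = 0
  · have hB : LinearIndependent k ![B 0, B 1] := by
      convert B.linearIndependent
      ext i; fin_cases i <;> rfl
    obtain ⟨t, ht⟩ := exists_sq_ne_self k
    exact ⟨B, .inr ⟨habel,
      LieAlgebra.sq_eq_zero_and_sq_eq_zero_of_lie_eq_zero hsq_smul hsq_add hclosed hB habel ht⟩⟩
  · obtain ⟨η, hη⟩ := LieAlgebra.exists_lie_eq_self_of_lie_ne_zero B habel
    let b := basisOfLinearIndependentOfCardEqFinrank (K := k)
      (LieAlgebra.linearIndependent_of_lie_eq_self habel hη) (by simp [hdim])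
    obtain ⟨a, ha⟩ := hclosed ⁅B 0, B 1⁆
    obtain ⟨d, hd⟩ := hclosed η
    refine ⟨b, .inl ⟨?_, ?_, ?_⟩⟩ <;> simp only [b, coe_basisOfLinearIndependentOfCardEqFinrank,
      Matrix.cons_val_zero, Matrix.cons_val_one]
    · exact hη
    · exact LieAlgebra.sq_eq_zero_of_lie_eq_self hsq_ad hη ha
    · rw [LieAlgebra.sq_eq_neg_of_lie_eq_self hsq_ad habel hη hd, ← neg_one_smul k,
        CharTwo.neg_eq, one_smul]
end

section
/- Let k be an algebraically closed field of characteristic 2 and let 𝔤 be a nonzero finite-dimensional Lie algebra over k equipped with a restricted structure given by a map sq : 𝔤 → 𝔤 satisfying sq(c·x) = c²·sq(x), sq(x + y) = sq(x) + sq(y) + [x, y], and [sq(x), y] = [x, [x, y]] for all x, y ∈ 𝔤 and c ∈ k. Then 𝔤 contains a nonzero 2-closed element, i.e. there exists x ≠ 0 in 𝔤 with sq(x) ∈ k·x. -/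
/-!
The iterates `x, sq x, sq (sq x), …` of an element `x ≠ 0` commute pairwise, since
`ad (sq y) = (ad y)²`; hence `sq` is additive on their span and restricts to a Frobenius-semilinear
endomorphism `f` of it. Such an `f` has an eigenvector. Let `f^[m+1] v = ∑_{i ≤ m} cᵢ • f^[i] v` be
the first linear relation among the iterates of some `v ≠ 0`. If `c₀ = 0`, taking `p`-th roots of
the `cᵢ` gives a nonzero vector in the kernel of `f`. If `c₀ ≠ 0`, a fixed vector `∑ aᵢ • f^[i] v`
amounts to a nonzero root `s = aₘ` of `Q(X) - X`, where `Q` is a polynomial in `X ^ p` of degree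
`p^(m+1)`; this polynomial has derivative `-1`, so it is separable and has `p^(m+1) ≥ 2` distinct
roots.
-/

open Polynomial Finset

namespace Polynomial

variable {k : Type*} [Field k]

/-- If `f^[m+1] v = ∑ cᵢ • f^[i] v` and the Frobenius-semilinear `f` fixes `∑_{i ≤ m} aᵢ • f^[i] v`,
then `aᵢ = (frobeniusRec p c i).eval aₘ`. -/
noncomputable def frobeniusRec (p : ℕ) (c : ℕ → k) : ℕ → k[X]
  | 0 => C (c 0) * X ^ p
  | i + 1 => frobeniusRec p c i ^ p + C (c (i + 1)) * X ^ p

theorem derivative_frobeniusRec (p : ℕ) [CharP k p] (c : ℕ → k) (i : ℕ) :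
    derivative (frobeniusRec p c i) = 0 := by
  have hX : derivative (X ^ p : k[X]) = 0 := by simp [derivative_X_pow]
  induction i with
  | zero => simp [frobeniusRec, hX]
  | succ i ih => simp [frobeniusRec, derivative_pow, hX]

theorem natDegree_frobeniusRec {p : ℕ} (hp : 1 < p) {c : ℕ → k} (hc : c 0 ≠ 0) (i : ℕ) :
    (frobeniusRec p c i).natDegree = p ^ (i + 1) := by
  induction i with
  | zero => simp [frobeniusRec, natDegree_C_mul_X_pow p _ hc]
  | succ i ih =>
    have hlt : (C (c (i + 1)) * X ^ p).natDegree < (frobeniusRec p c i ^ p).natDegree := by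
      rw [natDegree_pow, ih]
      calc (C (c (i + 1)) * X ^ p).natDegree ≤ p := natDegree_C_mul_X_pow_le _ _
        _ < p * p ^ (i + 1) := lt_mul_right (by omega) (Nat.one_lt_pow (by omega) hp)
    rw [frobeniusRec, natDegree_add_eq_left_of_natDegree_lt hlt, natDegree_pow, ih, ← pow_succ']

theorem exists_isRoot_ne_of_separable [IsAlgClosed k] {P : k[X]} (hP : P.Separable)
    (hdeg : 1 < P.natDegree) (a : k) : ∃ x, P.IsRoot x ∧ x ≠ a := by
  classical
  have hcard : P.roots.toFinset.card = P.natDegree := by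
    rw [Multiset.toFinset_card_of_nodup (nodup_roots hP), IsAlgClosed.card_roots_eq_natDegree]
  obtain ⟨x, hx, hxa⟩ := Finset.exists_mem_ne (hcard ▸ hdeg) a
  exact ⟨x, (mem_roots hP.ne_zero).1 (Multiset.mem_toFinset.1 hx), hxa⟩

theorem exists_ne_zero_eval_frobeniusRec_eq_self [IsAlgClosed k] (p : ℕ) [CharP k p]
    [Fact p.Prime] {c : ℕ → k} (hc : c 0 ≠ 0) (m : ℕ) :
    ∃ s ≠ 0, (frobeniusRec p c m).eval s = s := by
  have hp : 1 < p := (Fact.out : p.Prime).one_lt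
  have hsep : (frobeniusRec p c m - X).Separable := by
    rw [separable_def, derivative_sub, derivative_frobeniusRec, derivative_X, zero_sub]
    exact isCoprime_one_right.neg_right
  have hdeg : 1 < (frobeniusRec p c m - X).natDegree := by
    have h1 : 1 < (frobeniusRec p c m).natDegree := by
      rw [natDegree_frobeniusRec hp hc]; exact Nat.one_lt_pow (by omega) hp
    rwa [natDegree_sub_eq_left_of_natDegree_lt (by rwa [natDegree_X])]
  obtain ⟨s, hs, hs0⟩ := exists_isRoot_ne_of_separable hsep hdeg 0
  exact ⟨s, hs0, sub_eq_zero.1 (by simpa using hs)⟩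

end Polynomial

open Submodule

theorem IsNoetherian.exists_mem_span_image_range {R M : Type*} [Semiring R] [AddCommMonoid M]
    [Module R M] [IsNoetherian R M] (e : ℕ → M) : ∃ n, e n ∈ span R (e '' ↑(range n)) := by
  let S : ℕ →o Submodule R M :=
    ⟨fun n => span R (e '' ↑(range n)), fun a b hab => span_mono (by gcongr)⟩
  obtain ⟨n, hn⟩ := monotone_stabilizes_iff_noetherian.mpr inferInstance S
  refine ⟨n, ?_⟩
  change e n ∈ S n
  rw [hn (n + 1) n.le_succ]
  exact subset_span ⟨n, by simp, rfl⟩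

theorem Submodule.smul_add_ne_zero_of_notMem {K V : Type*} [DivisionRing K] [AddCommGroup V]
    [Module K V] {N : Submodule K V} {x y : V} {a : K} (hx : x ∉ N) (hy : y ∈ N) (ha : a ≠ 0) :
    a • x + y ≠ 0 := by
  intro h
  rw [add_eq_zero_iff_eq_neg] at h
  exact hx ((N.smul_mem_iff ha).1 (h ▸ N.neg_mem hy))

section FrobeniusSemilinear

variable {k V : Type*} [Field k] [AddCommGroup V] [Module k V] {p : ℕ}

theorem map_sum_smul_iterate [ExpChar k p] (f : V →ₛₗ[frobenius k p] V) (v : V) (s : Finset ℕ)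
    (a : ℕ → k) : f (∑ i ∈ s, a i • f^[i] v) = ∑ i ∈ s, a i ^ p • f^[i + 1] v := by
  simp [Function.iterate_succ_apply', frobenius_def]

theorem exists_ne_zero_apply_eq_zero_of_iterate_eq_sum [IsAlgClosed k] [ExpChar k p]
    (f : V →ₛₗ[frobenius k p] V) {v : V} {m : ℕ} {c : ℕ → k}
    (hm : f^[m] v ∉ span k ((f^[·] v) '' ↑(range m)))
    (hc : ∑ i ∈ range (m + 1), c i • f^[i] v = f^[m + 1] v) (hc0 : c 0 = 0) :
    ∃ x ≠ 0, f x = 0 := by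
  choose r hr using fun i => IsAlgClosed.exists_pow_nat_eq (c i) (expChar_pos k p)
  set y := ∑ i ∈ range m, r (i + 1) • f^[i] v
  have hy : y ∈ span k ((f^[·] v) '' ↑(range m)) :=
    sum_smul_mem _ _ fun i hi => subset_span ⟨i, hi, rfl⟩
  refine ⟨f^[m] v - y, sub_ne_zero.2 fun h => hm (h ▸ hy), ?_⟩
  rw [map_sub, map_sum_smul_iterate, ← Function.iterate_succ_apply' f, ← hc, sum_range_succ', hc0]
  simp [hr]

theorem exists_ne_zero_apply_eq_self_of_iterate_eq_sum [IsAlgClosed k] [CharP k p] [Fact p.Prime]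
    (f : V →ₛₗ[frobenius k p] V) {v : V} {m : ℕ} {c : ℕ → k}
    (hm : f^[m] v ∉ span k ((f^[·] v) '' ↑(range m)))
    (hc : ∑ i ∈ range (m + 1), c i • f^[i] v = f^[m + 1] v) (hc0 : c 0 ≠ 0) :
    ∃ x ≠ 0, f x = x := by
  obtain ⟨s, hs0, hs⟩ := exists_ne_zero_eval_frobeniusRec_eq_self p hc0 m
  set a : ℕ → k := fun i => (frobeniusRec p c i).eval s
  have ha0 : a 0 = c 0 * s ^ p := by simp [a, frobeniusRec]
  have ha_succ : ∀ i, a (i + 1) = a i ^ p + c (i + 1) * s ^ p := by simp [a, frobeniusRec]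
  have hy : ∑ i ∈ range m, a i • f^[i] v ∈ span k ((f^[·] v) '' ↑(range m)) :=
    sum_smul_mem _ _ fun i hi => subset_span ⟨i, hi, rfl⟩
  refine ⟨∑ i ∈ range (m + 1), a i • f^[i] v, ?_, ?_⟩
  · rw [sum_range_succ, add_comm, show a m = s from hs]
    exact smul_add_ne_zero_of_notMem hm hy hs0
  · calc f (∑ i ∈ range (m + 1), a i • f^[i] v)
        = ∑ i ∈ range m, a i ^ p • f^[i + 1] v + s ^ p • f^[m + 1] v := by
          rw [map_sum_smul_iterate, sum_range_succ, show a m = s from hs]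
      _ = ∑ i ∈ range m, (a i ^ p + c (i + 1) * s ^ p) • f^[i + 1] v + (c 0 * s ^ p) • v := by
          rw [← hc, sum_range_succ', smul_add, smul_sum, ← add_assoc]
          simp only [smul_smul, add_smul, sum_add_distrib, mul_comm (s ^ p),
            Function.iterate_zero_apply]
      _ = ∑ i ∈ range (m + 1), a i • f^[i] v := by
          rw [sum_range_succ' _ m, ha0]
          simp only [ha_succ, Function.iterate_zero_apply]

theorem exists_ne_zero_apply_eq_smul_of_frobenius [IsAlgClosed k] [CharP k p] [Fact p.Prime]
    [IsNoetherian k V] [Nontrivial V] (f : V →ₛₗ[frobenius k p] V) :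
    ∃ x ≠ 0, ∃ c : k, f x = c • x := by
  classical
  obtain ⟨v, hv⟩ := exists_ne (0 : V)
  have hex := IsNoetherian.exists_mem_span_image_range (R := k) (f^[·] v)
  obtain ⟨m, hm⟩ : ∃ m, Nat.find hex = m + 1 :=
    Nat.exists_eq_succ_of_ne_zero fun h => hv <| by
      simpa using (h ▸ Nat.find_spec hex : f^[0] v ∈ span k ((f^[·] v) '' ↑(range 0)))
  have hmin : f^[m] v ∉ span k ((f^[·] v) '' ↑(range m)) := Nat.find_min hex (by omega)
  obtain ⟨c, hc⟩ := (mem_span_image_finset_iff_exists_fun' k).1 (hm ▸ Nat.find_spec hex)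
  by_cases hc0 : c 0 = 0
  · obtain ⟨x, hx, hfx⟩ := exists_ne_zero_apply_eq_zero_of_iterate_eq_sum f hmin hc hc0
    exact ⟨x, hx, 0, by rw [hfx, zero_smul]⟩
  · obtain ⟨x, hx, hfx⟩ := exists_ne_zero_apply_eq_self_of_iterate_eq_sum f hmin hc hc0
    exact ⟨x, hx, 1, by rw [hfx, one_smul]⟩

end FrobeniusSemilinear

theorem lie_iterate_iterate_eq_zero {L : Type*} [LieRing L] (sq : L → L)
    (hsq_ad : ∀ x y : L, ⁅sq x, y⁆ = ⁅x, ⁅x, y⁆⁆) (x : L) (i j : ℕ) :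
    ⁅sq^[i] x, sq^[j] x⁆ = 0 := by
  induction i generalizing j with
  | zero =>
    induction j with
    | zero => exact lie_self x
    | succ j ih =>
      rw [Function.iterate_succ_apply', ← lie_skew, hsq_ad, ← lie_skew (sq^[j] x) (sq^[0] x), ih,
        neg_zero, lie_zero, neg_zero]
  | succ i ih => rw [Function.iterate_succ_apply', hsq_ad, ih, lie_zero]

section RestrictedLieAlgebra

variable {k L : Type*} [CommRing k] [LieRing L] [LieAlgebra k L]

theorem lie_eq_zero_of_mem_span {s : Set L} (hs : ∀ a ∈ s, ∀ b ∈ s, ⁅a, b⁆ = 0) {y z : L}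
    (hy : y ∈ span k s) (hz : z ∈ span k s) : ⁅y, z⁆ = 0 := by
  induction hy using span_induction with
  | mem a ha =>
    induction hz using span_induction with
    | mem b hb => exact hs a ha b hb
    | zero => exact lie_zero a
    | add b b' _ _ hb hb' => rw [lie_add, hb, hb', add_zero]
    | smul c b _ hb => rw [lie_smul, hb, smul_zero]
  | zero => exact zero_lie z
  | add a a' _ _ ha ha' => rw [add_lie, ha, ha', add_zero]
  | smul c a _ ha => rw [smul_lie, ha, smul_zero]

theorem lie_eq_zero_of_mem_span_iterate (sq : L → L)
    (hsq_ad : ∀ x y : L, ⁅sq x, y⁆ = ⁅x, ⁅x, y⁆⁆) {x y z : L}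
    (hy : y ∈ span k (Set.range (sq^[·] x))) (hz : z ∈ span k (Set.range (sq^[·] x))) :
    ⁅y, z⁆ = 0 :=
  lie_eq_zero_of_mem_span
    (by rintro _ ⟨i, rfl⟩ _ ⟨j, rfl⟩; exact lie_iterate_iterate_eq_zero sq hsq_ad x i j) hy hz

theorem sq_mem_span_iterate (sq : L → L)
    (hsq_smul : ∀ (c : k) (x : L), sq (c • x) = (c ^ 2) • sq x)
    (hsq_add : ∀ x y : L, sq (x + y) = sq x + sq y + ⁅x, y⁆)
    (hsq_ad : ∀ x y : L, ⁅sq x, y⁆ = ⁅x, ⁅x, y⁆⁆) {x y : L}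
    (hy : y ∈ span k (Set.range (sq^[·] x))) : sq y ∈ span k (Set.range (sq^[·] x)) := by
  induction hy using span_induction with
  | mem _ h =>
    obtain ⟨i, rfl⟩ := h
    exact subset_span ⟨i + 1, Function.iterate_succ_apply' sq i x⟩
  | zero =>
    rw [show sq 0 = 0 by simpa using hsq_smul 0 0]
    exact zero_mem _
  | add a b ha hb iha ihb =>
    rw [hsq_add, lie_eq_zero_of_mem_span_iterate sq hsq_ad ha hb, add_zero]
    exact add_mem iha ihb
  | smul c a _ ih => rw [hsq_smul]; exact smul_mem _ _ ih

noncomputable def sqOnSpanIterate [CharP k 2] (sq : L → L)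
    (hsq_smul : ∀ (c : k) (x : L), sq (c • x) = (c ^ 2) • sq x)
    (hsq_add : ∀ x y : L, sq (x + y) = sq x + sq y + ⁅x, y⁆)
    (hsq_ad : ∀ x y : L, ⁅sq x, y⁆ = ⁅x, ⁅x, y⁆⁆) (x : L) :
    span k (Set.range (sq^[·] x)) →ₛₗ[frobenius k 2] span k (Set.range (sq^[·] x)) where
  toFun y := ⟨sq y, sq_mem_span_iterate sq hsq_smul hsq_add hsq_ad y.2⟩
  map_add' y z := Subtype.ext <| by
    simp [hsq_add, lie_eq_zero_of_mem_span_iterate sq hsq_ad y.2 z.2]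
  map_smul' c y := Subtype.ext <| hsq_smul c y

end RestrictedLieAlgebra

/-- **Existence of 2-closed vectors.** Every nonzero finite-dimensional restricted Lie algebra
(`2`-Lie algebra) over an algebraically closed field `k` of characteristic `2` contains a
nonzero `2`-closed element, i.e. an `x ≠ 0` with `sq x ∈ k · x`. -/
theorem exists_two_closed_element_of_restricted_lie_algebra
    {k : Type*} [Field k] [IsAlgClosed k] [CharP k 2]
    {𝔤 : Type*} [LieRing 𝔤] [LieAlgebra k 𝔤] [FiniteDimensional k 𝔤] [Nontrivial 𝔤]
    (sq : 𝔤 → 𝔤)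
    (hsq_smul : ∀ (c : k) (x : 𝔤), sq (c • x) = (c ^ 2) • sq x)
    (hsq_add : ∀ x y : 𝔤, sq (x + y) = sq x + sq y + ⁅x, y⁆)
    (hsq_ad : ∀ x y : 𝔤, ⁅sq x, y⁆ = ⁅x, ⁅x, y⁆⁆) :
    ∃ x : 𝔤, x ≠ 0 ∧ ∃ c : k, sq x = c • x := by
  obtain ⟨x, hx⟩ := exists_ne (0 : 𝔤)
  have : Nontrivial (span k (Set.range (sq^[·] x))) :=
    nontrivial_iff_ne_bot.2 <| (Submodule.ne_bot_iff _).2 ⟨x, subset_span ⟨0, rfl⟩, hx⟩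
  obtain ⟨y, hy, c, hc⟩ :=
    exists_ne_zero_apply_eq_smul_of_frobenius (sqOnSpanIterate sq hsq_smul hsq_add hsq_ad x)
  exact ⟨y, by simpa using hy, c, congrArg Subtype.val hc⟩
end

section
/- Let k be a field of characteristic 2 and let A = k[[x, y, z]]/(xy + z²), a local ring with maximal ideal 𝔪 generated by the images x̄, ȳ, z̄ of x, y, z. Suppose D₁ and D₂ are k-derivations of A with D₁(x̄) = x̄, D₁(ȳ) = ȳ, D₁(z̄) = 0 and D₂(x̄) = 0, D₂(ȳ) = 0, D₂(z̄) = 1, and suppose D₁, D₂ are linearly independent over A (i.e. a·D₁ + b·D₂ = 0 with a, b ∈ A implies a = b = 0). If f, g ∈ A with f a unit and g ∈ 𝔪, then the derivation ξ = f·D₁ + g·D₂ satisfies ξ∘ξ ≠ 0. -/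
/-! If `ξ ∘ ξ = 0`, evaluating at `x̄` gives `(ξ f + f²) x̄ = 0`, and `x̄` is a nonzerodivisor of
`A`, so `ξ f = -f²`. But `D₁` sends `x̄, ȳ, z̄` into `𝔪`, hence (as `A = k + 𝔪`) all of `A` into
`𝔪`, and `g ∈ 𝔪`; so `ξ f ∈ 𝔪`, which puts the unit `f²` in the proper ideal `𝔪`. -/

open MvPowerSeries

noncomputable section

/-- The complete local ring `A = k[[x, y, z]]/(xy + z²)` of an `A₁` rational double point. -/
def A1Ring (k : Type*) [Field k] : Type _ :=
  MvPowerSeries (Fin 3) k ⧸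
    (Ideal.span {(X 0 : MvPowerSeries (Fin 3) k) * X 1 + X 2 ^ 2})

instance (k : Type*) [Field k] : CommRing (A1Ring k) := Ideal.Quotient.commRing _
instance (k : Type*) [Field k] : Algebra k (A1Ring k) := Ideal.Quotient.algebra k

/-- The image `x̄` of `x` in `A = k[[x, y, z]]/(xy + z²)`. -/
def A1x (k : Type*) [Field k] : A1Ring k := Ideal.Quotient.mk _ (X 0)

/-- The image `ȳ` of `y` in `A = k[[x, y, z]]/(xy + z²)`. -/
def A1y (k : Type*) [Field k] : A1Ring k := Ideal.Quotient.mk _ (X 1)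

/-- The image `z̄` of `z` in `A = k[[x, y, z]]/(xy + z²)`. -/
def A1z (k : Type*) [Field k] : A1Ring k := Ideal.Quotient.mk _ (X 2)

namespace MvPowerSeries

variable {σ R : Type*}

theorem mem_span_range_X_of_constantCoeff_eq_zero [CommSemiring R] [Finite σ]
    {φ : MvPowerSeries σ R} (hφ : constantCoeff φ = 0) : φ ∈ Ideal.span (Set.range X) := by
  classical
  have := Fintype.ofFinite σ
  cases isEmpty_or_nonempty σ
  · obtain rfl : φ = 0 := ext fun m => by rw [Subsingleton.elim m 0]; simpa using hφ
    exact zero_mem _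
  -- each nonzero exponent is assigned one variable it involves, whose multiple carries that term
  choose ι hι using fun m : σ →₀ ℕ => (by
    by_cases hm : m = 0
    · exact ⟨Classical.arbitrary σ, fun h => (h hm).elim⟩
    · obtain ⟨i, hi⟩ := Finsupp.ne_iff.mp hm
      exact ⟨i, fun _ => hi⟩ : ∃ i, m ≠ 0 → m i ≠ 0)
  let P (i : σ) : MvPowerSeries σ R := fun n =>
    if ι (n + Finsupp.single i 1) = i then coeff (n + Finsupp.single i 1) φ else 0
  have hP (i : σ) (n : σ →₀ ℕ) : coeff n (P i) =
      if ι (n + Finsupp.single i 1) = i then coeff (n + Finsupp.single i 1) φ else 0 := rfl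
  suffices φ = ∑ i, X i * P i from
    this ▸ Ideal.sum_mem _ fun i _ => Ideal.mul_mem_right _ _ (Ideal.subset_span ⟨i, rfl⟩)
  ext m
  simp only [map_sum, X_def, coeff_monomial_mul, one_mul]
  by_cases hm : m = 0
  · subst hm
    simp [hφ]
  have hle {i : σ} (hi : m i ≠ 0) : Finsupp.single i 1 ≤ m :=
    Finsupp.single_le_iff.mpr (Nat.one_le_iff_ne_zero.mpr hi)
  rw [Finset.sum_eq_single (ι m)]
  · rw [if_pos (hle (hι m hm)), hP, tsub_add_cancel_of_le (hle (hι m hm)), if_pos rfl]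
  · intro i _ hi
    split_ifs with h
    · rw [hP, tsub_add_cancel_of_le h, if_neg hi.symm]
    · rfl
  · simp

theorem X_dvd_of_X_dvd_mul_X_pow [CommSemiring R] {i j : σ} (hij : i ≠ j) {φ : MvPowerSeries σ R}
    {n : ℕ} (h : X i ∣ φ * X j ^ n) : X i ∣ φ := by
  refine X_dvd_iff.mpr fun m hm => ?_
  have hmn : (m + Finsupp.single j n) i = 0 := by simp [hm, hij.symm]
  simpa [X_pow_eq, coeff_add_mul_monomial] using X_dvd_iff.mp h _ hmn

theorem mem_span_X_mul_X_add_X_pow_of_mul_X_mem [CommRing R] [NoZeroDivisors R] [Nontrivial R]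
    {i j l : σ} (hil : i ≠ l) {n : ℕ} {U : MvPowerSeries σ R}
    (h : U * X i ∈ Ideal.span {X i * X j + X l ^ n}) :
    U ∈ Ideal.span {X i * X j + X l ^ n} := by
  obtain ⟨Q, hQ⟩ := Ideal.mem_span_singleton'.mp h
  obtain ⟨Q', rfl⟩ : X i ∣ Q := X_dvd_of_X_dvd_mul_X_pow hil ⟨U - Q * X j, by linear_combination hQ⟩
  have hXi : (X i : MvPowerSeries σ R) ≠ 0 := fun h0 => one_ne_zero (α := R) <| by
    simpa using congrArg (coeff (Finsupp.single i 1)) h0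
  have hU : (Q' * (X i * X j + X l ^ n) - U) * X i = 0 := by linear_combination hQ
  exact Ideal.mem_span_singleton'.mpr
    ⟨Q', sub_eq_zero.mp ((mul_eq_zero.mp hU).resolve_right hXi)⟩

end MvPowerSeries

namespace Derivation

variable {R A : Type*} [CommSemiring R] [CommRing A] [Algebra R A]

theorem map_mem_span_of_forall_map_mem (D : Derivation R A A) {S : Set A}
    (hS : ∀ s ∈ S, D s ∈ Ideal.span S) {a : A} (ha : a ∈ Ideal.span S) :
    D a ∈ Ideal.span S := by
  induction ha using Submodule.span_induction with
  | mem s hs => exact hS s hs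
  | zero => simp
  | add x y _ _ hx hy => rw [map_add]; exact add_mem hx hy
  | smul b x hx' hx =>
    rw [smul_eq_mul, D.leibniz, smul_eq_mul, smul_eq_mul]
    exact add_mem (Ideal.mul_mem_left _ _ hx) (Ideal.mul_mem_right _ _ hx')

end Derivation

namespace A1Ring

variable {k : Type*} [Field k]

theorem mk_X_mem_span (i : Fin 3) :
    Ideal.Quotient.mk _ (X i) ∈ Ideal.span {A1x k, A1y k, A1z k} := by
  fin_cases i
  · exact Ideal.subset_span (Set.mem_insert _ _)
  · exact Ideal.subset_span (Set.mem_insert_of_mem _ (Set.mem_insert _ _))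
  · exact Ideal.subset_span (Set.mem_insert_of_mem _ (Set.mem_insert_of_mem _ rfl))

theorem exists_sub_algebraMap_mem (a : A1Ring k) :
    ∃ c : k, a - algebraMap k (A1Ring k) c ∈ Ideal.span {A1x k, A1y k, A1z k} := by
  obtain ⟨F, rfl⟩ := Ideal.Quotient.mk_surjective a
  refine ⟨constantCoeff F, ?_⟩
  have hF : F - C (constantCoeff F) ∈ Ideal.span (Set.range X) :=
    mem_span_range_X_of_constantCoeff_eq_zero (by simp)
  have hspan : Ideal.span (Set.range X) ≤
      (Ideal.span {A1x k, A1y k, A1z k}).comap (Ideal.Quotient.mk _) :=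
    Ideal.span_le.mpr (Set.range_subset_iff.mpr mk_X_mem_span)
  have hmk : Ideal.Quotient.mk _ (F - C (constantCoeff F)) =
      Ideal.Quotient.mk _ F - algebraMap k (A1Ring k) (constantCoeff F) := by
    rw [map_sub, c_eq_algebraMap, Ideal.Quotient.mk_algebraMap]
    rfl
  exact hmk ▸ Ideal.mem_comap.mp (hspan hF)

theorem span_ne_top : Ideal.span {A1x k, A1y k, A1z k} ≠ ⊤ := by
  let eval₀ : A1Ring k →+* k := Ideal.Quotient.lift _ constantCoeff fun a ha => by
    obtain ⟨b, rfl⟩ := Ideal.mem_span_singleton'.mp ha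
    simp
  have hle : Ideal.span {A1x k, A1y k, A1z k} ≤ RingHom.ker eval₀ := by
    rw [Ideal.span_le, Set.insert_subset_iff, Set.insert_subset_iff, Set.singleton_subset_iff]
    refine ⟨?_, ?_, ?_⟩ <;> exact (Ideal.Quotient.lift_mk _ _ _).trans (constantCoeff_X _)
  exact fun htop => (RingHom.ker_ne_top eval₀) (top_le_iff.mp (htop ▸ hle))

theorem A1x_mem_nonZeroDivisors : A1x k ∈ nonZeroDivisors (A1Ring k) := by
  refine mem_nonZeroDivisors_iff_right.mpr fun a ha => ?_
  obtain ⟨U, rfl⟩ := Ideal.Quotient.mk_surjective a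
  change Ideal.Quotient.mk _ (U * X 0) = 0 at ha
  exact Ideal.Quotient.eq_zero_iff_mem.mpr
    (mem_span_X_mul_X_add_X_pow_of_mul_X_mem (by decide) (Ideal.Quotient.eq_zero_iff_mem.mp ha))

theorem derivation_map_mem_span (D : Derivation k (A1Ring k) (A1Ring k))
    (hx : D (A1x k) ∈ Ideal.span {A1x k, A1y k, A1z k})
    (hy : D (A1y k) ∈ Ideal.span {A1x k, A1y k, A1z k})
    (hz : D (A1z k) ∈ Ideal.span {A1x k, A1y k, A1z k}) (a : A1Ring k) :
    D a ∈ Ideal.span {A1x k, A1y k, A1z k} := by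
  obtain ⟨c, hc⟩ := exists_sub_algebraMap_mem a
  have hD := D.map_mem_span_of_forall_map_mem (by rintro s (rfl | rfl | rfl) <;> assumption) hc
  rwa [map_sub, D.map_algebraMap, sub_zero] at hD

end A1Ring

theorem a1_singularity_square_zero_field_does_not_vanish_general
    (k : Type*) [Field k]
    (D₁ D₂ : Derivation k (A1Ring k) (A1Ring k))
    (h1x : D₁ (A1x k) = A1x k) (h1y : D₁ (A1y k) = A1y k) (h1z : D₁ (A1z k) = 0)
    (h2x : D₂ (A1x k) = 0)
    (f g : A1Ring k) (hf : IsUnit f)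
    (hg : g ∈ Ideal.span {A1x k, A1y k, A1z k}) :
    ∃ a : A1Ring k, (f • D₁ + g • D₂) ((f • D₁ + g • D₂) a) ≠ 0 := by
  set ξ := f • D₁ + g • D₂
  by_contra! hξ2
  have hξ (a : A1Ring k) : ξ a = f * D₁ a + g * D₂ a := rfl
  have hξx : ξ (A1x k) = f * A1x k := by rw [hξ, h1x, h2x, mul_zero, add_zero]
  have hξf : ξ f + f * f = 0 := by
    refine mem_nonZeroDivisors_iff_right.mp A1Ring.A1x_mem_nonZeroDivisors _ ?_
    have hx := hξ2 (A1x k)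
    rw [hξx, Derivation.leibniz, hξx, smul_eq_mul, smul_eq_mul] at hx
    linear_combination hx
  have hD₁f : D₁ f ∈ Ideal.span {A1x k, A1y k, A1z k} :=
    A1Ring.derivation_map_mem_span D₁ (by rw [h1x]; exact A1Ring.mk_X_mem_span 0)
      (by rw [h1y]; exact A1Ring.mk_X_mem_span 1) (by rw [h1z]; exact zero_mem _) f
  have hff : f * f ∈ Ideal.span {A1x k, A1y k, A1z k} := by
    rw [eq_neg_of_add_eq_zero_right hξf, hξ]
    exact neg_mem (add_mem (Ideal.mul_mem_left _ _ hD₁f) (Ideal.mul_mem_right _ _ hg))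
  exact A1Ring.span_ne_top (Ideal.eq_top_of_isUnit_mem _ hff (hf.mul hf))

/-- **A vector field of square zero in a basis of the tangent module cannot vanish at an
`A₁` singularity.** In characteristic `2`, with `D₁, D₂` the standard basis of derivations
of `A = k[[x, y, z]]/(xy + z²)` (so `D₁ = x∂ₓ + y∂_y`, `D₂ = ∂_z`), if `f` is a unit and
`g ∈ 𝔪 = (x̄, ȳ, z̄)`, then `ξ = f·D₁ + g·D₂` satisfies `ξ ∘ ξ ≠ 0`. -/
theorem a1_singularity_square_zero_field_does_not_vanish
    (k : Type*) [Field k] [CharP k 2]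
    (D₁ D₂ : Derivation k (A1Ring k) (A1Ring k))
    (h1x : D₁ (A1x k) = A1x k) (h1y : D₁ (A1y k) = A1y k) (h1z : D₁ (A1z k) = 0)
    (h2x : D₂ (A1x k) = 0) (h2y : D₂ (A1y k) = 0) (h2z : D₂ (A1z k) = 1)
    (hindep : ∀ a b : A1Ring k, a • D₁ + b • D₂ = 0 → a = 0 ∧ b = 0)
    (f g : A1Ring k) (hf : IsUnit f)
    (hg : g ∈ Ideal.span {A1x k, A1y k, A1z k}) :
    ∃ a : A1Ring k, (f • D₁ + g • D₂) ((f • D₁ + g • D₂) a) ≠ 0 :=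
  a1_singularity_square_zero_field_does_not_vanish_general k D₁ D₂ h1x h1y h1z h2x f g hf hg

end
end

section
/- Let S be a commutative ring and A a commutative Hopf algebra over S that is free of rank 2 as an S-module. Suppose t ∈ A lies in the kernel of the counit and {1, t} is an S-basis of A. Then there exist unique elements f, g ∈ S such that t² = f·t and the comultiplication satisfies Δ(t) = t⊗1 + 1⊗t − g·(t⊗t); moreover f·g = 2. -/
/-!
A functional `φ` with `φ 1 = 1` and `φ t = 0` is the first coordinate for the basis `{1, t}`,
so the kernel of the counit is `S • t`; this gives `t² = f • t`, and the counit axioms force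
`Δ t = t ⊗ 1 + 1 ⊗ t - g • (t ⊗ t)`. Comparing `Δ (t * t) = Δ t * Δ t` with `Δ (f • t)` along
`t ⊗ t` gives `(fg - 1)(fg - 2) = 0`. Since `ε ∘ σ = ε`, the antipode maps `t` to some `d • t`,
and the antipode axiom `σ t + t - g • σ t * t = ε t = 0` gives `d (fg - 1) = 1`. Hence `fg = 2`.
-/

open TensorProduct

namespace Module.Basis

variable {ι κ S M N : Type*} [CommRing S] [AddCommGroup M] [Module S M]
  [AddCommGroup N] [Module S N]

theorem smul_left_injective (b : Basis ι S M) (i : ι) :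
    Function.Injective fun r : S => r • b i := by
  intro r s h
  simpa using congr($(congrArg b.repr h) i)

theorem smul_tmul_left_injective (b : Basis ι S M) (c : Basis κ S N) (i : ι) (j : κ) :
    Function.Injective fun r : S => r • (b i ⊗ₜ[S] c j) := by
  simpa using (b.tensorProduct c).smul_left_injective (i, j)

theorem eq_coord_zero_of_apply {φ : M →ₗ[S] S} (b : Basis (Fin 2) S M)
    (h0 : φ (b 0) = 1) (h1 : φ (b 1) = 0) : φ = b.coord 0 :=
  b.ext fun i => by fin_cases i <;> simp [h0, h1]

theorem eq_repr_smul_of_apply_eq_zero {φ : M →ₗ[S] S} (b : Basis (Fin 2) S M)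
    (h0 : φ (b 0) = 1) (h1 : φ (b 1) = 0) {x : M} (hx : φ x = 0) :
    x = b.repr x 1 • b 1 := by
  have hx0 : b.repr x 0 = 0 := by rwa [b.eq_coord_zero_of_apply h0 h1] at hx
  calc x = ∑ i, b.repr x i • b i := (b.sum_repr x).symm
    _ = b.repr x 1 • b 1 := by rw [Fin.sum_univ_two, hx0, zero_smul, zero_add]

end Module.Basis

namespace Coalgebra

variable {S C : Type*} [CommRing S] [AddCommGroup C] [Module S C] [Coalgebra S C]

theorem exists_comul_eq_of_basis_fin_two (b : Module.Basis (Fin 2) S C)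
    (h0 : counit (R := S) (b 0) = 1) (h1 : counit (R := S) (b 1) = 0) :
    ∃ g : S, comul (R := S) (b 1) = b 1 ⊗ₜ b 0 + b 0 ⊗ₜ b 1 - g • (b 1 ⊗ₜ b 1) := by
  set c := (b.tensorProduct b).repr (comul (R := S) (b 1))
  have hΔ : comul (R := S) (b 1) = c (0, 0) • (b 0 ⊗ₜ b 0) + c (0, 1) • (b 0 ⊗ₜ b 1)
      + c (1, 0) • (b 1 ⊗ₜ b 0) + c (1, 1) • (b 1 ⊗ₜ b 1) := by
    conv_lhs => rw [← (b.tensorProduct b).sum_repr (comul (R := S) (b 1))]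
    simp only [Fintype.sum_prod_type, Fin.sum_univ_two, Module.Basis.tensorProduct_apply]
    abel
  have hl i :=
    congr(b.repr (_root_.TensorProduct.lid S C $(rTensor_counit_comul (R := S) (b 1))) i)
  have hr i :=
    congr(b.repr (_root_.TensorProduct.rid S C $(lTensor_counit_comul (R := S) (b 1))) i)
  obtain ⟨h00, h01⟩ : c (0, 0) = 0 ∧ c (0, 1) = 1 := by
    simpa [hΔ, h0, h1, Fin.forall_fin_two] using hl
  have h10 : c (1, 0) = 1 := by simpa [hΔ, h0, h1] using hr 1
  refine ⟨-c (1, 1), ?_⟩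
  rw [hΔ, h00, h01, h10]
  module

end Coalgebra

namespace Bialgebra

variable {S A : Type*} [CommRing S] [Ring A] [Bialgebra S A]

theorem smul_tmul_self_eq_zero_of_comul_eq {t : A} {f g : S} (ht : t * t = f • t)
    (hΔ : Coalgebra.comul (R := S) t = t ⊗ₜ 1 + 1 ⊗ₜ t - g • (t ⊗ₜ t)) :
    ((f * g - 1) * (f * g - 2)) • (t ⊗ₜ[S] t) = 0 := by
  have h := comul_mul (R := S) t t
  rw [ht, map_smul, hΔ] at h
  simp only [add_mul, mul_add, sub_mul, mul_sub, smul_mul_assoc, mul_smul_comm,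
    Algebra.TensorProduct.tmul_mul_tmul, one_mul, mul_one, ht, ← smul_tmul', tmul_smul] at h
  linear_combination (norm := module) -h

end Bialgebra

namespace HopfAlgebra

variable {S A : Type*} [CommRing S] [Ring A] [HopfAlgebra S A]

theorem isUnit_mul_sub_one_of_basis (b : Module.Basis (Fin 2) S A) (hb0 : b 0 = 1)
    (h1 : Coalgebra.counit (R := S) (b 1) = 0) {f g : S} (ht : b 1 * b 1 = f • b 1)
    (hΔ : Coalgebra.comul (R := S) (b 1) = b 1 ⊗ₜ 1 + 1 ⊗ₜ b 1 - g • (b 1 ⊗ₜ b 1)) :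
    IsUnit (f * g - 1) := by
  have h0 : Coalgebra.counit (R := S) (b 0) = 1 := by rw [hb0, Bialgebra.counit_one]
  set d := b.repr (antipode S (b 1)) 1
  have hd : antipode S (b 1) = d • b 1 :=
    b.eq_repr_smul_of_apply_eq_zero h0 h1 (by rw [counit_antipode, h1])
  have h := mul_antipode_rTensor_comul_apply (R := S) (b 1)
  rw [hΔ, h1, map_zero] at h
  simp only [map_sub, map_add, map_smul, LinearMap.rTensor_tmul, LinearMap.mul'_apply, hd,
    antipode_one, mul_one, one_mul, smul_mul_assoc, ht] at h
  have hcoeff : d + 1 - g * (d * f) = 0 :=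
    b.smul_left_injective 1 <| show _ = (0 : S) • b 1 by rw [zero_smul, ← h]; module
  exact .of_mul_eq_one d (by linear_combination -hcoeff)

end HopfAlgebra

/-- **Normal form for Hopf algebras of rank 2.** Let `A` be a commutative Hopf algebra over
a commutative ring `S`, free of rank `2` as an `S`-module with basis `{1, t}` where `t`
lies in the kernel of the counit. Then there are unique `f, g ∈ S` with `t² = f·t` and
`Δ(t) = t⊗1 + 1⊗t − g·(t⊗t)`, and they satisfy `f·g = 2`. -/
theorem rank_two_hopf_algebra_normal_form
    {S A : Type*} [CommRing S] [CommRing A] [HopfAlgebra S A]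
    (t : A) (b : Module.Basis (Fin 2) S A) (hb0 : b 0 = 1) (hb1 : b 1 = t)
    (ht : Coalgebra.counit (R := S) t = 0) :
    ∃ f g : S,
      (t ^ 2 = f • t) ∧
      (Coalgebra.comul (R := S) t =
        t ⊗ₜ[S] (1 : A) + (1 : A) ⊗ₜ[S] t - g • (t ⊗ₜ[S] t)) ∧
      f * g = 2 ∧
      ∀ f' g' : S, t ^ 2 = f' • t →
        Coalgebra.comul (R := S) t =
          t ⊗ₜ[S] (1 : A) + (1 : A) ⊗ₜ[S] t - g' • (t ⊗ₜ[S] t) →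
        f' = f ∧ g' = g := by
  subst hb1
  have h0 : Coalgebra.counit (R := S) (b 0) = 1 := by rw [hb0, Bialgebra.counit_one]
  set f := b.repr (b 1 ^ 2) 1
  have hsq : b 1 ^ 2 = f • b 1 := b.eq_repr_smul_of_apply_eq_zero h0 ht <| by
    rw [Bialgebra.counit_pow, ht, zero_pow two_ne_zero]
  have hmul : b 1 * b 1 = f • b 1 := by rw [← sq, hsq]
  obtain ⟨g, hΔ⟩ := Coalgebra.exists_comul_eq_of_basis_fin_two b h0 ht
  rw [hb0] at hΔ
  have hquad : (f * g - 1) * (f * g - 2) = 0 := b.smul_tmul_left_injective b 1 1 <| by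
    simpa using Bialgebra.smul_tmul_self_eq_zero_of_comul_eq hmul hΔ
  have hfg : f * g - 2 = 0 :=
    (HopfAlgebra.isUnit_mul_sub_one_of_basis b hb0 ht hmul hΔ).mul_right_eq_zero.mp hquad
  refine ⟨f, g, hsq, hΔ, by linear_combination hfg, fun f' g' hf' hg' => ⟨?_, ?_⟩⟩
  · exact b.smul_left_injective 1 (hf'.symm.trans hsq)
  · exact b.smul_tmul_left_injective b 1 1 (sub_right_inj.mp (hg'.symm.trans hΔ))
end

section
/- Let L be an abelian group equipped with a symmetric ℤ-valued bilinear form B such that B(x, x) is even for every x ∈ L. Suppose e₁, …, e_r ∈ L satisfy B(eᵢ, eⱼ) = −2 if i = j and B(eᵢ, eⱼ) = 0 if i ≠ j, and suppose there exists m ∈ L with e₁ + ⋯ + e_r = 2m. Then r is divisible by 4. -/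
/-!
Expanding `B (∑ eᵢ, ∑ eᵢ)` by orthogonality gives `-2r`, while writing the sum as `2m` gives
`4 B(m, m)`. Since `B(m, m)` is even, `8 ∣ 2r`, i.e. `4 ∣ r`.
-/

namespace AddMonoidHom

variable {L : Type*} [AddCommGroup L]

def ofBiadditive (B : L → L → ℤ)
    (hBaddl : ∀ x y z, B (x + y) z = B x z + B y z)
    (hBaddr : ∀ x y z, B x (y + z) = B x y + B x z) : L →+ L →+ ℤ :=
  AddMonoidHom.mk' (fun x => AddMonoidHom.mk' (B x) (hBaddr x)) fun x y => by
    ext z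
    exact hBaddl x y z

variable (B : L →+ L →+ ℤ)

theorem apply_sum_sum_of_orthogonal {ι : Type*} [Fintype ι] [DecidableEq ι] (e : ι → L) (c : ℤ)
    (he : ∀ i j, B (e i) (e j) = if i = j then c else 0) :
    B (∑ i, e i) (∑ i, e i) = Fintype.card ι * c := by
  simp [map_sum, he]

theorem apply_nsmul_nsmul (n : ℕ) (x : L) : B (n • x) (n • x) = n ^ 2 * B x x := by
  simp only [map_nsmul, nsmul_apply, nsmul_eq_mul]
  ring

theorem four_dvd_card_of_sum_eq_two_nsmul (hBeven : ∀ x, 2 ∣ B x x)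
    {ι : Type*} [Fintype ι] [DecidableEq ι] (e : ι → L)
    (he : ∀ i j, B (e i) (e j) = if i = j then -2 else 0) (m : L) (hm : ∑ i, e i = 2 • m) :
    4 ∣ Fintype.card ι := by
  have hsum := B.apply_sum_sum_of_orthogonal e (-2) he
  rw [hm, B.apply_nsmul_nsmul] at hsum
  obtain ⟨k, hk⟩ := hBeven m
  have : (Fintype.card ι : ℤ) = 4 * -k := by rw [hk] at hsum; push_cast at hsum; linarith
  exact_mod_cast Dvd.intro _ this.symm

end AddMonoidHom

theorem sum_of_orthogonal_minus_two_vectors_even_implies_four_dvd_general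
    {L : Type*} [AddCommGroup L] (B : L → L → ℤ)
    (hBaddl : ∀ x y z, B (x + y) z = B x z + B y z)
    (hBaddr : ∀ x y z, B x (y + z) = B x y + B x z)
    (hBeven : ∀ x, 2 ∣ B x x)
    (r : ℕ) (e : Fin r → L)
    (he : ∀ i j, B (e i) (e j) = if i = j then -2 else 0)
    (m : L) (hm : ∑ i, e i = 2 • m) :
    4 ∣ r := by
  simpa using (AddMonoidHom.ofBiadditive B hBaddl hBaddr).four_dvd_card_of_sum_eq_two_nsmul
    hBeven e he m hm

/-- **Even overlattice parity.** If `L` is an abelian group with a symmetric, bi-additive,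
`ℤ`-valued and even bilinear form `B`, and `e 1, …, e r` are pairwise orthogonal vectors of
square `-2` whose sum is divisible by `2` in `L`, then `4 ∣ r`. -/
theorem sum_of_orthogonal_minus_two_vectors_even_implies_four_dvd
    {L : Type*} [AddCommGroup L] (B : L → L → ℤ)
    (hBsymm : ∀ x y, B x y = B y x)
    (hBaddl : ∀ x y z, B (x + y) z = B x z + B y z)
    (hBaddr : ∀ x y z, B x (y + z) = B x y + B x z)
    (hBeven : ∀ x, 2 ∣ B x x)
    (r : ℕ) (e : Fin r → L)
    (he : ∀ i j, B (e i) (e j) = if i = j then -2 else 0)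
    (m : L) (hm : ∑ i, e i = 2 • m) :
    4 ∣ r :=
  sum_of_orthogonal_minus_two_vectors_even_implies_four_dvd_general B hBaddl hBaddr hBeven r e he m
    hm
end
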